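/- arXiv:1704.05745 — 7 statements merged into one kernel-verified Lean document; each statement's English description precedes it below -/
import Mathlib

section
/- Let Y be a real-valued random variable whose law is absolutely continuous with respect to Lebesgue measure with a density f such that f vanishes outside [0,1), f ≤ M Lebesgue-almost everywhere for some M < ∞, and f is Riemann integrable (equivalently: f is bounded and continuous at Lebesgue-almost every point). Then: (a) for every Borel set A ⊆ [0,1), lim_{k→∞} P( fract(k·Y) ∈ A ) equals the Lebesgue measure of A, where fract(x) = x − ⌊x⌋ denotes the fractional part and k ranges over positive integers; (b) for every positive integer k, the law of fract(k·Y) is absolutely continuous with a density bounded by M Lebesgue-almost everywhere. -/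
/-! Writing `ψ = 1_A ∘ fract`, translation invariance of Lebesgue measure gives
`∫ f(t) ψ(kt) dt = ∫ f(u + s/k) ψ(ku + s) du` for every `s`. Averaging over `s ∈ [0,1]` and
replacing `f(u + s/k)` by `f(u)` costs at most `sup_{0 < h ≤ 1/k} ‖f(· + h) - f‖₁`, which tends
to `0` by continuity of translation in `L¹`; what remains is, by Fubini,
`∫ f(u) ∫₀¹ ψ(ku + s) ds du = λ(A) ∫ f`.

For the second part, `t ↦ fract(kt)` preserves Lebesgue measure on `[0,1)`, so the law of
`fract(kY)`, an image of a measure below `M • λ|[0,1)`, is itself below `M • λ`, and its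
Radon–Nikodym derivative is the required density. -/

open MeasureTheory Filter Set
open scoped Topology ENNReal

theorem MeasureTheory.Integrable.tendsto_integral_abs_comp_add_right_sub {φ : ℝ → ℝ}
    (hφ : Integrable φ) :
    Tendsto (fun h => ∫ u, |φ (u + h) - φ u|) (𝓝 0) (𝓝 0) := by
  let τ : C(ℝ, C(ℝ, ℝ)) := (ContinuousMap.mk (fun p : ℝ × ℝ => p.2 + p.1) (by fun_prop)).curry
  have hτ : ∀ h, MeasurePreserving (τ h) volume volume := measurePreserving_add_right volume
  have hdist : ∀ h, dist (Lp.compMeasurePreserving (τ h) (hτ h) (hφ.toL1 φ))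
      (Lp.compMeasurePreserving (τ 0) (hτ 0) (hφ.toL1 φ)) = ∫ u, |φ (u + h) - φ u| := by
    intro h
    rw [L1.dist_eq_integral_dist]
    refine integral_congr_ae ?_
    have hφτ : ∀ a, (hφ.toL1 φ : ℝ → ℝ) ∘ τ a =ᵐ[volume] φ ∘ τ a := fun a =>
      (hτ a).quasiMeasurePreserving.ae_eq_comp hφ.coeFn_toL1
    filter_upwards [Lp.coeFn_compMeasurePreserving (hφ.toL1 φ) (hτ h),
      Lp.coeFn_compMeasurePreserving (hφ.toL1 φ) (hτ 0), hφτ h, hφτ 0] with u h1 h2 h3 h4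
    simp_all [τ, Real.dist_eq]
  have hlim := Tendsto.compMeasurePreservingLp (f := fun _ : ℝ => hφ.toL1 φ) tendsto_const_nhds
    (τ.continuous.tendsto 0) hτ (hτ 0) ENNReal.one_ne_top
  simpa only [hdist] using tendsto_iff_dist_tendsto_zero.1 hlim

theorem norm_integral_comp_add_right_mul_sub_le {φ g : ℝ → ℝ} (hφ : Integrable φ)
    (hg : AEStronglyMeasurable g) {C : ℝ} (hgC : ∀ u, ‖g u‖ ≤ C) (h : ℝ) :
    ‖(∫ u, φ (u + h) * g u) - ∫ u, φ u * g u‖ ≤ C * ∫ u, |φ (u + h) - φ u| := by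
  rw [← integral_sub ((hφ.comp_add_right h).mul_bdd hg (ae_of_all _ hgC))
    (hφ.mul_bdd hg (ae_of_all _ hgC)), ← integral_const_mul]
  refine norm_integral_le_of_norm_le (((hφ.comp_add_right h).sub hφ).abs.const_mul C)
    (ae_of_all _ fun u => ?_)
  rw [← sub_mul, norm_mul, Real.norm_eq_abs, mul_comm]
  exact mul_le_mul_of_nonneg_right (hgC u) (abs_nonneg _)

theorem Function.Periodic.intervalIntegral_comp_add_left {ψ : ℝ → ℝ} {T : ℝ}
    (hper : Function.Periodic ψ T) (d : ℝ) : ∫ s in 0..T, ψ (d + s) = ∫ x in 0..T, ψ x := by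
  rw [intervalIntegral.integral_comp_add_left, add_zero, hper.intervalIntegral_add_eq d 0, zero_add]

section Oscillation

variable {φ ψ : ℝ → ℝ} {C : ℝ}

theorem integrable_uncurry_mul_comp_mul_add (hφ : Integrable φ) (hψ : Measurable ψ)
    (hC : ∀ x, |ψ x| ≤ C) (c : ℝ) :
    Integrable (Function.uncurry fun s u => φ u * ψ (c * u + s))
      ((volume.restrict (Ioc (0 : ℝ) 1)).prod volume) :=
  (((integrable_const (1 : ℝ)).mul_prod hφ).mul_bdd
    (hψ.comp (by fun_prop : Measurable fun p : ℝ × ℝ => c * p.2 + p.1)).aestronglyMeasurable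
    (ae_of_all _ fun p => hC _)).congr (ae_of_all _ fun p => by simp [Function.uncurry])

theorem intervalIntegral_integral_mul_comp_mul_add (hφ : Integrable φ) (hψ : Measurable ψ)
    (hper : Function.Periodic ψ 1) (hC : ∀ x, |ψ x| ≤ C) (c : ℝ) :
    ∫ s in 0..1, ∫ u, φ u * ψ (c * u + s) = (∫ x in 0..1, ψ x) * ∫ t, φ t := by
  rw [intervalIntegral.integral_of_le zero_le_one,
    integral_integral_swap (integrable_uncurry_mul_comp_mul_add hφ hψ hC c)]
  simp only [← intervalIntegral.integral_of_le zero_le_one, intervalIntegral.integral_const_mul,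
    hper.intervalIntegral_comp_add_left]
  rw [integral_mul_const, mul_comm]

theorem abs_integral_mul_comp_mul_sub_le (hφ : Integrable φ) (hψ : Measurable ψ)
    (hper : Function.Periodic ψ 1) (hC : ∀ x, |ψ x| ≤ C) {c ε : ℝ} (hc : 0 < c)
    (hε : ∀ h ∈ Ioc 0 c⁻¹, ∫ u, |φ (u + h) - φ u| ≤ ε) :
    |(∫ t, φ t * ψ (c * t)) - (∫ x in 0..1, ψ x) * ∫ t, φ t| ≤ C * ε := by
  have hshift : ∀ s, ∫ u, φ (u + s / c) * ψ (c * u + s) = ∫ t, φ t * ψ (c * t) := by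
    intro s
    rw [← integral_add_right_eq_self (fun t => φ t * ψ (c * t)) (s / c)]
    simp only [mul_add, mul_div_cancel₀ _ hc.ne']
  have hI : IntervalIntegrable (fun s => ∫ u, φ (u + s / c) * ψ (c * u + s)) volume 0 1 := by
    simp only [hshift, intervalIntegrable_const]
  have hJ : IntervalIntegrable (fun s => ∫ u, φ u * ψ (c * u + s)) volume 0 1 :=
    (intervalIntegrable_iff_integrableOn_Ioc_of_le zero_le_one).2
      (integrable_uncurry_mul_comp_mul_add hφ hψ hC c).integral_prod_left
  have hpoint : ∀ s ∈ uIoc (0 : ℝ) 1,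
      ‖(∫ u, φ (u + s / c) * ψ (c * u + s)) - ∫ u, φ u * ψ (c * u + s)‖ ≤ C * ε := by
    intro s hs
    rw [uIoc_of_le zero_le_one] at hs
    refine (norm_integral_comp_add_right_mul_sub_le hφ (hψ.comp (by fun_prop)).aestronglyMeasurable
      (fun u => hC _) _).trans (mul_le_mul_of_nonneg_left (hε _ ⟨div_pos hs.1 hc, ?_⟩)
      ((abs_nonneg _).trans (hC 0)))
    rw [div_eq_mul_inv]
    exact mul_le_of_le_one_left (inv_nonneg.2 hc.le) hs.2
  calc |(∫ t, φ t * ψ (c * t)) - (∫ x in 0..1, ψ x) * ∫ t, φ t|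
      = ‖∫ s in 0..1, ((∫ u, φ (u + s / c) * ψ (c * u + s)) - ∫ u, φ u * ψ (c * u + s))‖ := by
        rw [intervalIntegral.integral_sub hI hJ,
          intervalIntegral_integral_mul_comp_mul_add hφ hψ hper hC c]
        simp [hshift]
    _ ≤ C * ε * |1 - 0| := intervalIntegral.norm_integral_le_of_norm_le_const hpoint
    _ = C * ε := by simp

theorem tendsto_integral_mul_comp_mul_atTop (hφ : Integrable φ) (hψ : Measurable ψ)
    (hper : Function.Periodic ψ 1) (hC : ∀ x, |ψ x| ≤ C) :
    Tendsto (fun c => ∫ t, φ t * ψ (c * t)) atTop (𝓝 ((∫ x in 0..1, ψ x) * ∫ t, φ t)) := by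
  have hC0 : 0 ≤ C := (abs_nonneg _).trans (hC 0)
  rw [Metric.tendsto_atTop]
  intro ε hε
  have hη : 0 < ε / (C + 1) := by positivity
  obtain ⟨δ, hδ, hsmall⟩ := Metric.eventually_nhds_iff.1
    (Metric.tendsto_nhds.1 hφ.tendsto_integral_abs_comp_add_right_sub _ hη)
  refine ⟨2 / δ, fun c hc => ?_⟩
  have hc0 : 0 < c := (by positivity : 0 < 2 / δ).trans_le hc
  have hcδ : c⁻¹ < δ :=
    calc c⁻¹ ≤ (2 / δ)⁻¹ := inv_anti₀ (by positivity) hc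
      _ = δ / 2 := inv_div 2 δ
      _ < δ := half_lt_self hδ
  rw [Real.dist_eq]
  calc _ ≤ C * (ε / (C + 1)) := by
        refine abs_integral_mul_comp_mul_sub_le hφ hψ hper hC hc0 fun h hh => ?_
        have := hsmall (show dist h 0 < δ by
          rw [Real.dist_0_eq_abs, abs_of_pos hh.1]; exact hh.2.trans_lt hcδ)
        exact (abs_lt.1 (Real.dist_0_eq_abs _ ▸ this)).2.le
    _ < ε := by
        rw [mul_div_assoc', div_lt_iff₀ (by positivity)]
        nlinarith

end Oscillation

theorem Function.Periodic.intervalIntegral_comp_natCast_mul {ψ : ℝ → ℝ} {T : ℝ}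
    (hper : Function.Periodic ψ T) (hint : ∀ a b, IntervalIntegrable ψ volume a b) {k : ℕ}
    (hk : 0 < k) : ∫ x in 0..T, ψ (k * x) = ∫ x in 0..T, ψ x := by
  have hk' : (k : ℝ) ≠ 0 := Nat.cast_ne_zero.2 hk.ne'
  rw [intervalIntegral.integral_comp_mul_left _ hk', mul_zero,
    ← zero_add ((k : ℝ) * T), ← Int.cast_natCast, ← zsmul_eq_mul,
    hper.intervalIntegral_add_zsmul_eq _ _ hint, zero_add, zsmul_eq_mul, Int.cast_natCast,
    smul_eq_mul, inv_mul_cancel_left₀ hk']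

theorem intervalIntegral_indicator_one {T : Set ℝ} (hT : MeasurableSet T) {a b : ℝ} (hab : a ≤ b) :
    ∫ x in a..b, T.indicator (1 : ℝ → ℝ) x = volume.real (T ∩ Ico a b) := by
  rw [intervalIntegral.integral_of_le hab, ← integral_Ico_eq_integral_Ioc,
    integral_indicator_one hT, measureReal_restrict_apply hT]

theorem Int.preimage_fract_inter_Ico (S : Set ℝ) : Int.fract ⁻¹' S ∩ Ico 0 1 = S ∩ Ico 0 1 := by
  ext x
  simp only [mem_inter_iff, mem_preimage]
  exact and_congr_left fun hx => by rw [Int.fract_eq_self.2 hx]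

theorem intervalIntegral_indicator_one_comp_fract {S : Set ℝ} (hS : MeasurableSet S) :
    ∫ x in 0..1, S.indicator (1 : ℝ → ℝ) (Int.fract x) = volume.real (S ∩ Ico 0 1) := by
  rw [← Int.preimage_fract_inter_Ico,
    ← intervalIntegral_indicator_one (measurable_fract hS) zero_le_one]
  rfl

theorem measurePreserving_fract_natCast_mul {k : ℕ} (hk : 0 < k) :
    MeasurePreserving (fun t => Int.fract ((k : ℝ) * t)) (volume.restrict (Ico 0 1))
      (volume.restrict (Ico 0 1)) := by
  have hmeas : Measurable fun t : ℝ => Int.fract ((k : ℝ) * t) := by fun_prop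
  refine ⟨hmeas, Measure.ext fun S hS => ?_⟩
  have hψ : ∀ a b, IntervalIntegrable (fun x => S.indicator (1 : ℝ → ℝ) (Int.fract x)) volume a b :=
    fun a b => (intervalIntegrable_const (c := (1 : ℝ))).mono_fun
      ((measurable_one.indicator hS).comp measurable_fract).aestronglyMeasurable
      (ae_of_all _ fun x => norm_indicator_le_norm_self _ _)
  have hfin : ∀ T : Set ℝ, volume (T ∩ Ico 0 1) ≠ ⊤ := fun T =>
    measure_ne_top_of_subset inter_subset_right (by simp)
  rw [Measure.map_apply hmeas hS, Measure.restrict_apply (hmeas hS), Measure.restrict_apply hS,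
    ← ENNReal.toReal_eq_toReal_iff' (hfin _) (hfin _)]
  change volume.real _ = volume.real _
  rw [← intervalIntegral_indicator_one (hmeas hS) zero_le_one,
    ← intervalIntegral_indicator_one_comp_fract hS]
  exact ((Int.fract_periodic ℝ).comp (S.indicator 1)).intervalIntegral_comp_natCast_mul hψ hk

theorem MeasureTheory.Measure.exists_density_le_of_le_smul {α : Type*} [MeasurableSpace α]
    {μ ν : Measure α} [SigmaFinite μ] [IsFiniteMeasure ν] {c : ℝ} (hc : 0 ≤ c) (h : ν ≤ ENNReal.ofReal c • μ) :
    ∃ g : α → ℝ, Measurable g ∧ (∀ᵐ x ∂μ, 0 ≤ g x ∧ g x ≤ c) ∧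
      ν = μ.withDensity fun x => ENNReal.ofReal (g x) := by
  have hac : ν ≪ μ := Measure.absolutelyContinuous_of_le_smul h
  have hle : ν.rnDeriv μ ≤ᵐ[μ] fun _ => ENNReal.ofReal c :=
    ae_le_of_forall_setLIntegral_le_of_sigmaFinite (Measure.measurable_rnDeriv _ _) fun s _ _ => by
      rw [Measure.setLIntegral_rnDeriv hac, setLIntegral_const]
      simpa using h s
  refine ⟨fun x => (ν.rnDeriv μ x).toReal, (Measure.measurable_rnDeriv _ _).ennreal_toReal, ?_, ?_⟩
  · filter_upwards [hle] with x hx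
    exact ⟨ENNReal.toReal_nonneg, ENNReal.toReal_le_of_le_ofReal hc hx⟩
  · refine (Measure.withDensity_rnDeriv_eq ν μ hac).symm.trans (withDensity_congr_ae ?_)
    filter_upwards [Measure.rnDeriv_lt_top ν μ] with x hx
    exact (ENNReal.ofReal_toReal hx.ne).symm

theorem withDensity_ofReal_le_smul_restrict {α : Type*} [MeasurableSpace α] {μ : Measure α}
    {f : α → ℝ} {s : Set α} (hs : MeasurableSet s) {M : ℝ} (hsupp : ∀ x ∉ s, f x = 0)
    (hM : ∀ᵐ x ∂μ, f x ≤ M) :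
    μ.withDensity (fun x => ENNReal.ofReal (f x)) ≤ ENNReal.ofReal M • μ.restrict s := by
  rw [← withDensity_const, ← withDensity_indicator hs]
  refine withDensity_mono ?_
  filter_upwards [hM] with x hx
  by_cases hxs : x ∈ s
  · simpa [hxs] using ENNReal.ofReal_le_ofReal hx
  · simp [hxs, hsupp x hxs]

theorem map_fract_natCast_mul_le_smul {ν : Measure ℝ} {c : ℝ≥0∞}
    (h : ν ≤ c • volume.restrict (Ico 0 1)) {k : ℕ} (hk : 0 < k) :
    ν.map (fun t => Int.fract ((k : ℝ) * t)) ≤ c • volume :=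
  calc ν.map (fun t => Int.fract ((k : ℝ) * t))
      ≤ (c • volume.restrict (Ico (0 : ℝ) 1)).map (fun t => Int.fract ((k : ℝ) * t)) :=
        Measure.map_mono h (by fun_prop)
    _ = c • volume.restrict (Ico 0 1) := by
        rw [Measure.map_smul, (measurePreserving_fract_natCast_mul hk).map_eq]
    _ ≤ c • volume := by gcongr; exact Measure.restrict_le_self

section Density

variable {Ω : Type*} [MeasurableSpace Ω] {P : Measure Ω} {Y : Ω → ℝ} {f : ℝ → ℝ}

theorem integrable_and_integral_eq_one_of_map_eq_withDensity [IsProbabilityMeasure P]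
    (hY : Measurable Y) (hf : Measurable f) (hf0 : ∀ x, 0 ≤ f x)
    (hlaw : P.map Y = volume.withDensity fun x => ENNReal.ofReal (f x)) :
    Integrable f ∧ ∫ x, f x = 1 := by
  have hmass : ∫⁻ x, ENNReal.ofReal (f x) = 1 := by
    have := Measure.isProbabilityMeasure_map (μ := P) hY.aemeasurable
    have hP := measure_univ (μ := P.map Y)
    rwa [hlaw, withDensity_apply _ MeasurableSet.univ, Measure.restrict_univ] at hP
  have hfi : Integrable f := (lintegral_ofReal_ne_top_iff_integrable hf.aestronglyMeasurable
    (ae_of_all _ hf0)).1 (by simp [hmass])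
  refine ⟨hfi, ?_⟩
  rw [← ENNReal.ofReal_eq_one, ofReal_integral_eq_lintegral_ofReal hfi (ae_of_all _ hf0), hmass]

theorem measure_preimage_eq_ofReal_setIntegral (hY : Measurable Y) (hf0 : ∀ x, 0 ≤ f x)
    (hfi : Integrable f) (hlaw : P.map Y = volume.withDensity fun x => ENNReal.ofReal (f x))
    {T : Set ℝ} (hT : MeasurableSet T) : P (Y ⁻¹' T) = ENNReal.ofReal (∫ t in T, f t) := by
  rw [← Measure.map_apply hY hT, hlaw, withDensity_apply _ hT,
    ofReal_integral_eq_lintegral_ofReal hfi.integrableOn (ae_of_all _ hf0)]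

theorem tendsto_measure_fract_natCast_mul_mem [IsProbabilityMeasure P] (hY : Measurable Y)
    (hf : Measurable f) (hf0 : ∀ x, 0 ≤ f x)
    (hlaw : P.map Y = volume.withDensity fun x => ENNReal.ofReal (f x)) {A : Set ℝ}
    (hA : MeasurableSet A) (hAI : A ⊆ Ico 0 1) :
    Tendsto (fun k : ℕ => P {ω | Int.fract ((k : ℝ) * Y ω) ∈ A}) atTop (𝓝 (volume A)) := by
  obtain ⟨hfi, hf1⟩ := integrable_and_integral_eq_one_of_map_eq_withDensity hY hf hf0 hlaw
  set ψ : ℝ → ℝ := A.indicator 1 ∘ Int.fract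
  have hψ : Measurable ψ := (measurable_one.indicator hA).comp measurable_fract
  have hψ1 : ∀ x, |ψ x| ≤ 1 := fun x => by
    simpa [ψ] using norm_indicator_le_norm_self (1 : ℝ → ℝ) (a := Int.fract x) (s := A)
  have hmean : ∫ x in 0..1, ψ x = volume.real A :=
    (intervalIntegral_indicator_one_comp_fract hA).trans (by rw [inter_eq_left.2 hAI])
  have hlim := (tendsto_integral_mul_comp_mul_atTop hfi hψ ((Int.fract_periodic ℝ).comp _)
    hψ1).comp tendsto_natCast_atTop_atTop
  rw [hmean, hf1, mul_one] at hlim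
  rw [← ofReal_measureReal (measure_ne_top_of_subset hAI (by simp))]
  refine (ENNReal.tendsto_ofReal hlim).congr fun k => ?_
  have hS : MeasurableSet ((fun t => Int.fract ((k : ℝ) * t)) ⁻¹' A) :=
    (by fun_prop : Measurable fun t : ℝ => Int.fract ((k : ℝ) * t)) hA
  change _ = P (Y ⁻¹' ((fun t => Int.fract ((k : ℝ) * t)) ⁻¹' A))
  rw [measure_preimage_eq_ofReal_setIntegral hY hf0 hfi hlaw hS, ← integral_indicator hS]
  refine congrArg ENNReal.ofReal (integral_congr_ae (ae_of_all _ fun t => ?_))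
  by_cases ht : Int.fract ((k : ℝ) * t) ∈ A <;> simp [ψ, ht]

theorem exists_density_map_fract_natCast_mul_le [IsFiniteMeasure P] (hY : Measurable Y)
    (hf0 : ∀ x, 0 ≤ f x) {M : ℝ} (hsupp : ∀ x ∉ Ico (0 : ℝ) 1, f x = 0)
    (hM : ∀ᵐ x ∂(volume : Measure ℝ), f x ≤ M)
    (hlaw : P.map Y = volume.withDensity fun x => ENNReal.ofReal (f x)) {k : ℕ} (hk : 0 < k) :
    ∃ g : ℝ → ℝ, Measurable g ∧ (∀ᵐ x ∂(volume : Measure ℝ), 0 ≤ g x ∧ g x ≤ M) ∧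
      P.map (fun ω => Int.fract ((k : ℝ) * Y ω)) =
        volume.withDensity fun x => ENNReal.ofReal (g x) := by
  obtain ⟨x, hx⟩ := hM.exists
  refine Measure.exists_density_le_of_le_smul ((hf0 x).trans hx) ?_
  have hcomp : P.map (fun ω => Int.fract ((k : ℝ) * Y ω)) =
      (P.map Y).map (fun t => Int.fract ((k : ℝ) * t)) :=
    (Measure.map_map (g := fun t => Int.fract ((k : ℝ) * t)) (by fun_prop) hY).symm
  rw [hcomp, hlaw]
  exact map_fract_natCast_mul_le_smul
    (withDensity_ofReal_le_smul_restrict measurableSet_Ico hsupp hM) hk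

end Density

theorem fract_mul_law_tendsto_uniform_general
    {Ω : Type*} [MeasurableSpace Ω] (P : Measure Ω) [IsProbabilityMeasure P]
    (Y : Ω → ℝ) (hYmeas : Measurable Y)
    (f : ℝ → ℝ) (hfmeas : Measurable f) (hf0 : ∀ x, 0 ≤ f x)
    (M : ℝ)
    (hsupp : ∀ x : ℝ, x ∉ Set.Ico (0 : ℝ) 1 → f x = 0)
    (hM : ∀ᵐ x ∂(volume : Measure ℝ), f x ≤ M)
    (hlaw : P.map Y = volume.withDensity fun x => ENNReal.ofReal (f x)) :
    (∀ A : Set ℝ, MeasurableSet A → A ⊆ Set.Ico (0 : ℝ) 1 →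
      Tendsto (fun k : ℕ => P {ω | Int.fract ((k : ℝ) * Y ω) ∈ A}) atTop
        (nhds (volume A))) ∧
    (∀ k : ℕ, 0 < k → ∃ g : ℝ → ℝ, Measurable g ∧
      (∀ᵐ x ∂(volume : Measure ℝ), 0 ≤ g x ∧ g x ≤ M) ∧
      P.map (fun ω => Int.fract ((k : ℝ) * Y ω))
        = volume.withDensity fun x => ENNReal.ofReal (g x)) :=
  ⟨fun _ hA hAI => tendsto_measure_fract_natCast_mul_mem hYmeas hfmeas hf0 hlaw hA hAI,
    fun _ hk => exists_density_map_fract_natCast_mul_le hYmeas hf0 hsupp hM hlaw hk⟩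

/-- **Equidistribution of fractional parts `fract(k·Y)`.**  Let `Y` be a real random
variable whose law has a density `f` (w.r.t. Lebesgue measure) vanishing outside `[0,1)`,
bounded by `M` a.e., and Riemann integrable (bounded and a.e. continuous).  Then
(a) for every Borel `A ⊆ [0,1)`, `P(fract(k·Y) ∈ A) → λ(A)` as `k → ∞` over positive
integers; and (b) for every positive integer `k`, the law of `fract(k·Y)` has a density
bounded by `M` a.e. -/
theorem fract_mul_law_tendsto_uniform
    {Ω : Type*} [MeasurableSpace Ω] (P : Measure Ω) [IsProbabilityMeasure P]
    (Y : Ω → ℝ) (hYmeas : Measurable Y)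
    (f : ℝ → ℝ) (hfmeas : Measurable f) (hf0 : ∀ x, 0 ≤ f x)
    (M : ℝ)
    (hsupp : ∀ x : ℝ, x ∉ Set.Ico (0 : ℝ) 1 → f x = 0)
    (hM : ∀ᵐ x ∂(volume : Measure ℝ), f x ≤ M)
    (hbdd : ∃ C : ℝ, ∀ x, |f x| ≤ C)
    (hcont : ∀ᵐ x ∂(volume : Measure ℝ), ContinuousAt f x)
    (hlaw : P.map Y = volume.withDensity fun x => ENNReal.ofReal (f x)) :
    (∀ A : Set ℝ, MeasurableSet A → A ⊆ Set.Ico (0 : ℝ) 1 →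
      Tendsto (fun k : ℕ => P {ω | Int.fract ((k : ℝ) * Y ω) ∈ A}) atTop
        (nhds (volume A))) ∧
    (∀ k : ℕ, 0 < k → ∃ g : ℝ → ℝ, Measurable g ∧
      (∀ᵐ x ∂(volume : Measure ℝ), 0 ≤ g x ∧ g x ≤ M) ∧
      P.map (fun ω => Int.fract ((k : ℝ) * Y ω))
        = volume.withDensity fun x => ENNReal.ofReal (g x)) :=
  fract_mul_law_tendsto_uniform_general P Y hYmeas f hfmeas hf0 M hsupp hM hlaw
end

section
/- Let X be a complete separable metric space, φ a regularity kernel, and ν a locally finite Borel measure on X. Then there exist two locally finite Borel measures ν_R and ν_⊥ on X such that: (i) ν = ν_R + ν_⊥; (ii) ν_R and ν_⊥ are mutually singular; (iii) ν_⊥ is mutually singular to every locally finite Borel measure ρ on X with I_φ(ρ) < ∞; (iv) there exists a sequence (A_n)_{n∈ℕ} of pairwise disjoint Borel sets such that ν_R is the restriction of ν to ⋃_n A_n (equivalently ν_R = Σ_n ν|_{A_n}) and I_φ(ν|_{A_n}) < ∞ for every n. -/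
/-!
Pass from `ν` to an equivalent finite measure `μ`. Among countable unions of measurable sets on
which `ν` has finite `φ`-energy, some `S` has maximal `μ`-measure, so `ν|Sᶜ` charges no set of
finite energy. If `I_φ(ρ) < ∞` and `ν|E ≤ n ρ`, then `I_φ(ν|E) ≤ n² I_φ(ρ) < ∞`; applied to the
slices `{dν/dρ ≤ n}` of the Lebesgue decomposition of `ν|Sᶜ` with respect to `ρ`, this kills its
absolutely continuous part, so `ν|Sᶜ ⟂ ρ`.
-/

open MeasureTheory Filter Set

/-- The `φ`-energy of a Borel measure: `I_φ(ν) = ∫∫ φ(d(x,y)) dν(x) dν(y)`. -/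
noncomputable def phiEnergy {X : Type*} [MetricSpace X] [MeasurableSpace X]
    (φ : ℝ → ENNReal) (ν : Measure X) : ENNReal :=
  ∫⁻ x, ∫⁻ y, φ (dist x y) ∂ν ∂ν

open scoped ENNReal

namespace MeasureTheory

variable {α : Type*} [MeasurableSpace α]

theorem exists_mem_forall_measure_le_of_iUnion_mem (μ : Measure α) {𝒮 : Set (Set α)}
    (hne : 𝒮.Nonempty) (hU : ∀ A : ℕ → Set α, (∀ n, A n ∈ 𝒮) → ⋃ n, A n ∈ 𝒮) :
    ∃ S ∈ 𝒮, ∀ T ∈ 𝒮, μ T ≤ μ S := by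
  obtain ⟨u, -, hu_lim, hu_mem⟩ := exists_seq_tendsto_sSup (hne.image μ) (OrderTop.bddAbove _)
  choose A hA𝒮 hAu using hu_mem
  refine ⟨⋃ n, A n, hU A hA𝒮, fun T hT => ?_⟩
  calc μ T ≤ sSup (μ '' 𝒮) := le_sSup (mem_image_of_mem μ hT)
    _ ≤ μ (⋃ n, A n) :=
      le_of_tendsto' hu_lim fun n => hAu n ▸ measure_mono (subset_iUnion A n)

theorem Measure.exists_seq_measure_eq_zero_of_disjoint_iUnion (μ : Measure α) [SFinite μ]
    {P : Set α → Prop} (h0 : P ∅) :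
    ∃ A : ℕ → Set α, (∀ n, MeasurableSet (A n) ∧ P (A n)) ∧
      ∀ B, MeasurableSet B → P B → Disjoint B (⋃ n, A n) → μ B = 0 := by
  set 𝒮 : Set (Set α) :=
    {S | ∃ A : ℕ → Set α, (∀ n, MeasurableSet (A n) ∧ P (A n)) ∧ S = ⋃ n, A n}
  have hne : 𝒮.Nonempty := ⟨_, fun _ => ∅, fun _ => ⟨.empty, h0⟩, rfl⟩
  have hU : ∀ A : ℕ → Set α, (∀ n, A n ∈ 𝒮) → ⋃ n, A n ∈ 𝒮 := by
    intro A hA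
    choose B hB hAB using hA
    refine ⟨fun k => B k.unpair.1 k.unpair.2, fun k => hB _ _, ?_⟩
    rw [iUnion_unpair]
    exact iUnion_congr hAB
  obtain ⟨_, ⟨A, hA, rfl⟩, hmax⟩ := exists_mem_forall_measure_le_of_iUnion_mem μ.toFinite hne hU
  refine ⟨A, hA, fun B hB hPB hdisj => absolutelyContinuous_toFinite μ ?_⟩
  have hBA : B ∪ ⋃ n, A n ∈ 𝒮 :=
    ⟨fun n => Nat.casesOn n B A, fun n => n.casesOn ⟨hB, hPB⟩ hA,
      union_iUnion_nat_succ fun n => Nat.casesOn n B A⟩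
  have hle := hmax _ hBA
  rw [measure_union hdisj (.iUnion fun n => (hA n).1)] at hle
  exact nonpos_iff_eq_zero.1 <|
    ENNReal.le_of_add_le_add_right (measure_ne_top _ _) (by rwa [zero_add])

theorem Measure.exists_pairwise_disjoint_measure_eq_zero_of_disjoint_iUnion (μ : Measure α)
    [SFinite μ] {P : Set α → Prop} (hP : Antitone P) (h0 : P ∅) :
    ∃ A : ℕ → Set α, (∀ n, MeasurableSet (A n)) ∧ (∀ n, P (A n)) ∧
      Pairwise (Function.onFun Disjoint A) ∧
      ∀ B, MeasurableSet B → P B → Disjoint B (⋃ n, A n) → μ B = 0 := by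
  obtain ⟨A, hA, hnull⟩ := μ.exists_seq_measure_eq_zero_of_disjoint_iUnion h0
  refine ⟨disjointed A, .disjointed fun n => (hA n).1,
    fun n => hP (disjointed_subset A n) (hA n).2, disjoint_disjointed A, ?_⟩
  rwa [iUnion_disjointed]

theorem Measure.restrict_nullSet_inter_rnDeriv_le_smul (μ ρ : Measure α)
    [μ.HaveLebesgueDecomposition ρ] (c : ℝ≥0∞) :
    μ.restrict ((mutuallySingular_singularPart μ ρ).nullSet ∩ {x | μ.rnDeriv ρ x ≤ c})
      ≤ c • ρ := by
  set hsing := mutuallySingular_singularPart μ ρ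
  set E := hsing.nullSet ∩ {x | μ.rnDeriv ρ x ≤ c}
  have hE : MeasurableSet E :=
    hsing.measurableSet_nullSet.inter (measurable_rnDeriv μ ρ measurableSet_Iic)
  have h_sing : (μ.singularPart ρ).restrict E = 0 :=
    Measure.restrict_eq_zero.2 (measure_mono_null inter_subset_left hsing.measure_nullSet)
  calc μ.restrict E
      = (ρ.restrict E).withDensity (μ.rnDeriv ρ) := by
        conv_lhs => rw [μ.haveLebesgueDecomposition_add ρ]
        rw [Measure.restrict_add, h_sing, zero_add, restrict_withDensity hE]
    _ ≤ (ρ.restrict E).withDensity fun _ => c :=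
        withDensity_mono (ae_restrict_of_forall_mem hE fun _ hx => hx.2)
    _ = c • ρ.restrict E := withDensity_const c
    _ ≤ c • ρ := by gcongr; exact Measure.restrict_le_self

theorem Measure.mutuallySingular_of_forall_restrict_le_smul {μ ρ : Measure α} [SigmaFinite μ]
    [SigmaFinite ρ]
    (h : ∀ s, MeasurableSet s → ∀ n : ℕ, μ.restrict s ≤ (n : ℝ≥0∞) • ρ → μ s = 0) :
    μ ⟂ₘ ρ := by
  set hsing := mutuallySingular_singularPart μ ρ
  set t := hsing.nullSet
  have h_slices : ∀ n : ℕ, μ (t ∩ {x | μ.rnDeriv ρ x ≤ n}) = 0 := fun n =>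
    h _ (hsing.measurableSet_nullSet.inter (measurable_rnDeriv μ ρ measurableSet_Iic)) n
      (μ.restrict_nullSet_inter_rnDeriv_le_smul ρ n)
  have h_finite : ∀ᵐ x ∂μ.singularPart ρ + ρ.withDensity (μ.rnDeriv ρ),
      x ∈ t → μ.rnDeriv ρ x < ∞ := by
    refine ae_add_measure_iff.2 ⟨?_, ?_⟩
    · filter_upwards [measure_eq_zero_iff_ae_notMem.1 hsing.measure_nullSet] with x hx hxt
      exact absurd hxt hx
    · filter_upwards [withDensity_absolutelyContinuous ρ _ |>.ae_le (μ.rnDeriv_lt_top ρ)]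
        with x hx _
      exact hx
  rw [← μ.haveLebesgueDecomposition_add ρ] at h_finite
  refine ⟨t, hsing.measurableSet_nullSet, ?_, hsing.measure_compl_nullSet⟩
  rw [measure_eq_zero_iff_ae_notMem]
  filter_upwards [h_finite, ae_all_iff.2 fun n => measure_eq_zero_iff_ae_notMem.1 (h_slices n)]
    with x hfin hslices hxt
  obtain ⟨n, hn⟩ := ENNReal.exists_nat_gt (hfin hxt).ne
  exact hslices n ⟨hxt, hn.le⟩

end MeasureTheory

section Energy

variable {X : Type*} [MetricSpace X] [MeasurableSpace X] (φ : ℝ → ℝ≥0∞)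

theorem phiEnergy_mono {μ ν : Measure X} (h : μ ≤ ν) : phiEnergy φ μ ≤ phiEnergy φ ν :=
  lintegral_mono' h fun _ => lintegral_mono' h le_rfl

theorem phiEnergy_smul (ρ : Measure X) {c : ℝ≥0∞} (hc : c ≠ ∞) :
    phiEnergy φ (c • ρ) = c * c * phiEnergy φ ρ := by
  simp only [phiEnergy, lintegral_smul_measure, smul_eq_mul]
  rw [lintegral_const_mul' c _ hc, mul_assoc]

theorem phiEnergy_lt_top_of_le_smul {μ ρ : Measure X} {c : ℝ≥0∞} (hc : c ≠ ∞) (hμ : μ ≤ c • ρ)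
    (hρ : phiEnergy φ ρ < ∞) : phiEnergy φ μ < ∞ := by
  refine (phiEnergy_mono φ hμ).trans_lt ?_
  rw [phiEnergy_smul φ ρ hc]
  exact ENNReal.mul_lt_top (ENNReal.mul_lt_top hc.lt_top hc.lt_top) hρ

end Energy

theorem measure_phi_decomposition_general
    {X : Type*} [MetricSpace X] [TopologicalSpace.SeparableSpace X]
    [MeasurableSpace X]
    (φ : ℝ → ENNReal)
    (ν : Measure X) [IsLocallyFiniteMeasure ν] :
    ∃ νR νperp : Measure X,
      IsLocallyFiniteMeasure νR ∧ IsLocallyFiniteMeasure νperp ∧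
      ν = νR + νperp ∧
      νR ⟂ₘ νperp ∧
      (∀ ρ : Measure X, IsLocallyFiniteMeasure ρ → phiEnergy φ ρ < ⊤ → νperp ⟂ₘ ρ) ∧
      ∃ A : ℕ → Set X,
        (∀ n, MeasurableSet (A n)) ∧
        Pairwise (Function.onFun Disjoint A) ∧
        νR = ν.restrict (⋃ n, A n) ∧
        (∀ n, phiEnergy φ (ν.restrict (A n)) < ⊤) := by
  have hP : Antitone fun s : Set X => phiEnergy φ (ν.restrict s) < ∞ := fun _ _ hst h =>
    (phiEnergy_mono φ (Measure.restrict_mono hst le_rfl)).trans_lt h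
  obtain ⟨A, hA, hA_energy, hA_disj, hA_max⟩ :=
    ν.exists_pairwise_disjoint_measure_eq_zero_of_disjoint_iUnion hP (by simp [phiEnergy])
  set S := ⋃ n, A n
  have hS : MeasurableSet S := .iUnion hA
  refine ⟨ν.restrict S, ν.restrict Sᶜ, inferInstance, inferInstance,
    (ν.restrict_add_restrict_compl hS).symm, ?_, fun ρ _ hρ => ?_, A, hA, hA_disj, rfl,
    hA_energy⟩
  · exact ⟨Sᶜ, hS.compl, by simp [hS.compl], by simp [hS]⟩
  refine Measure.mutuallySingular_of_forall_restrict_le_smul fun s hs n hle => ?_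
  rw [Measure.restrict_apply hs]
  refine hA_max _ (hs.inter hS.compl) ?_ (disjoint_compl_left.mono_left inter_subset_right)
  rw [← Measure.restrict_restrict hs]
  exact phiEnergy_lt_top_of_le_smul φ (ENNReal.natCast_ne_top n) hle hρ

/-- **Decomposition of a locally finite measure into a `φ`-regular and a `φ`-singular
part.**  `ν = ν_R + ν_⊥` where `ν_R ⟂ ν_⊥`, `ν_⊥` is singular to every locally finite
measure of finite `φ`-energy, and `ν_R` is the restriction of `ν` to a countable disjoint
union of Borel sets on each of which `ν` has finite `φ`-energy. -/
theorem measure_phi_decomposition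
    {X : Type*} [MetricSpace X] [CompleteSpace X] [TopologicalSpace.SeparableSpace X]
    [MeasurableSpace X] [BorelSpace X]
    (φ : ℝ → ENNReal)
    (hφcont : ContinuousOn φ (Set.Ici (0 : ℝ)))
    (hφanti : AntitoneOn φ (Set.Ici (0 : ℝ)))
    (hφfin : ∀ r : ℝ, 0 < r → φ r ≠ ⊤)
    (ν : Measure X) [IsLocallyFiniteMeasure ν] :
    ∃ νR νperp : Measure X,
      IsLocallyFiniteMeasure νR ∧ IsLocallyFiniteMeasure νperp ∧
      ν = νR + νperp ∧
      νR ⟂ₘ νperp ∧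
      (∀ ρ : Measure X, IsLocallyFiniteMeasure ρ → phiEnergy φ ρ < ⊤ → νperp ⟂ₘ ρ) ∧
      ∃ A : ℕ → Set X,
        (∀ n, MeasurableSet (A n)) ∧
        Pairwise (Function.onFun Disjoint A) ∧
        νR = ν.restrict (⋃ n, A n) ∧
        (∀ n, phiEnergy φ (ν.restrict (A n)) < ⊤) :=
  measure_phi_decomposition_general φ ν
end

section
/- Let X be a locally compact, complete separable metric space. Then there exists a countable set Ψ of compactly supported continuous functions X → ℝ, dense in C_c(X) with respect to the supremum norm, with the following property: whenever (μ_k) is a sequence of locally finite Borel measures on X such that ∫ f dμ_k converges to a finite limit for every f ∈ Ψ, there exists a locally finite Borel measure μ on X such that ∫ f dμ_k → ∫ f dμ for every f ∈ C_c(X) (i.e. μ_k converges vaguely to μ). -/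
/-!
Fix a compact exhaustion `K n` of `X`, cutoffs `χ n ∈ [0, 1]` equal to `1` on `K n` and supported
in `K (n + 1)`, and a countable dense subset `D` of `C(X, ℝ)` for the compact-open topology. Then
`Ψ = {χ n} ∪ {χ n * h | h ∈ D}` works: a function `g` supported in `K n` is approximated by
`χ n * h` with error at most `ε * χ (n + 1)`, and since `∫ χ (n + 1) dμ_k` converges it is bounded,
so the integrals `∫ g dμ_k` form a Cauchy sequence. Their limit is a positive linear functional on
`C_c(X)`, represented by a Radon measure by the Riesz–Markov–Kakutani theorem.
-/

open MeasureTheory Filter Set Topology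
open scoped CompactlySupported

lemma cauchySeq_of_forall_dist_le {α : Type*} [PseudoMetricSpace α] {a : ℕ → α}
    (h : ∀ ε > 0, ∃ b : ℕ → α, CauchySeq b ∧ ∀ k, dist (a k) (b k) ≤ ε) :
    CauchySeq a := by
  refine Metric.cauchySeq_iff.2 fun ε hε => ?_
  obtain ⟨b, hb, hab⟩ := h (ε / 4) (by positivity)
  obtain ⟨N, hN⟩ := Metric.cauchySeq_iff.1 hb (ε / 4) (by positivity)
  refine ⟨N, fun m hm n hn => ?_⟩
  calc dist (a m) (a n) ≤ dist (a m) (b m) + dist (b m) (b n) + dist (b n) (a n) :=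
        dist_triangle4 _ _ _ _
    _ ≤ ε / 4 + ε / 4 + ε / 4 := by
        gcongr
        exacts [hab m, (hN m hm n hn).le, dist_comm (b n) (a n) ▸ hab n]
    _ < ε := by linarith

section Approximation

variable {X : Type*} [TopologicalSpace X]

lemma ContinuousMap.exists_mem_abs_sub_lt_on_of_dense {D : Set C(X, ℝ)} (hD : Dense D)
    (g : C(X, ℝ)) {K : Set X} (hK : IsCompact K) {ε : ℝ} (hε : 0 < ε) :
    ∃ h ∈ D, ∀ x ∈ K, |g x - h x| < ε := by
  have : CompactSpace K := isCompact_iff_compactSpace.mp hK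
  have hg : g.restrict K ∈ closure ((fun f : C(X, ℝ) => f.restrict K) '' D) :=
    mem_closure_image (ContinuousMap.continuous_restrict K).continuousAt (hD g)
  obtain ⟨_, ⟨h, hD, rfl⟩, hgh⟩ := Metric.mem_closure_iff.1 hg ε hε
  exact ⟨h, hD, fun x hx =>
    (ContinuousMap.dist_apply_le_dist (f := g.restrict K) (g := h.restrict K) ⟨x, hx⟩).trans_lt hgh⟩

lemma abs_sub_mul_le_of_eqOn_one {g h χ χ' : X → ℝ} {K L : Set X} {ε : ℝ} (hε : 0 ≤ ε)
    (hg : tsupport g ⊆ K) (hχK : EqOn χ 1 K) (hχ : ∀ x, χ x ∈ Icc 0 1) (hχL : tsupport χ ⊆ L)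
    (hχ'L : EqOn χ' 1 L) (hχ' : ∀ x, 0 ≤ χ' x) (hgh : ∀ x ∈ L, |g x - h x| < ε) (x : X) :
    |g x - χ x * h x| ≤ ε * χ' x := by
  have hgχ : g x = χ x * g x := by
    by_cases hx : x ∈ tsupport g
    · rw [hχK (hg hx), Pi.one_apply, one_mul]
    · rw [image_eq_zero_of_notMem_tsupport hx, mul_zero]
  by_cases hx : x ∈ L
  · rw [hgχ, ← mul_sub, abs_mul, abs_of_nonneg (hχ x).1, hχ'L hx, Pi.one_apply, mul_one]
    exact (mul_le_of_le_one_left (abs_nonneg _) (hχ x).2).trans (hgh x hx).le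
  · rw [hgχ, image_eq_zero_of_notMem_tsupport fun hx' => hx (hχL hx')]
    simpa using mul_nonneg hε (hχ' x)

theorem exists_countable_cutoff_approximating_set
    [T2Space X] [LocallyCompactSpace X] [SecondCountableTopology X] :
    ∃ Ψ : Set (X → ℝ), Ψ.Countable ∧ (∀ f ∈ Ψ, Continuous f ∧ HasCompactSupport f) ∧
      ∀ g : X → ℝ, Continuous g → HasCompactSupport g →
        ∃ χ ∈ Ψ, (∀ x, χ x ≤ 1) ∧ ∀ ε > 0, ∃ f ∈ Ψ, ∀ x, |g x - f x| ≤ ε * χ x := by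
  obtain ⟨D, hDc, hDd⟩ := TopologicalSpace.exists_countable_dense C(X, ℝ)
  let K := CompactExhaustion.choice X
  choose χ hχK hχc hχsupp hχ01 using fun n =>
    exists_continuousMap_one_of_isCompact_subset_isOpen (K.isCompact n) isOpen_interior
      (K.subset_interior_succ n)
  refine ⟨range (fun n => ⇑(χ n)) ∪ ⋃ n, (fun h : C(X, ℝ) => ⇑(χ n * h)) '' D,
    (countable_range _).union (countable_iUnion fun n => hDc.image _), ?_, ?_⟩
  · rintro f (⟨n, rfl⟩ | hf)
    · exact ⟨(χ n).continuous, hχc n⟩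
    · obtain ⟨n, h, -, rfl⟩ := mem_iUnion.1 hf
      exact ⟨(χ n * h).continuous, HasCompactSupport.mul_right (hχc n)⟩
  · intro g hg hgc
    obtain ⟨n, hn⟩ := K.exists_superset_of_isCompact hgc
    refine ⟨χ (n + 1), mem_union_left _ (mem_range_self _), fun x => (hχ01 _ x).2,
      fun ε hε => ?_⟩
    obtain ⟨h, hD, hh⟩ := ContinuousMap.exists_mem_abs_sub_lt_on_of_dense hDd ⟨g, hg⟩
      (K.isCompact (n + 1)) hε
    exact ⟨_, mem_union_right _ (mem_iUnion_of_mem n (mem_image_of_mem _ hD)),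
      abs_sub_mul_le_of_eqOn_one hε.le hn (hχK n) (hχ01 n) ((hχsupp n).trans interior_subset)
        (hχK (n + 1)) (fun x => (hχ01 _ x).1) hh⟩

end Approximation

section Integrals

variable {X : Type*} [MeasurableSpace X]

lemma abs_integral_sub_le_mul_integral {μ : Measure X} {f g χ : X → ℝ} {ε : ℝ}
    (hg : Integrable g μ) (hf : Integrable f μ) (hχ : Integrable χ μ)
    (h : ∀ x, |g x - f x| ≤ ε * χ x) :
    |∫ x, g x ∂μ - ∫ x, f x ∂μ| ≤ ε * ∫ x, χ x ∂μ := by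
  rw [← integral_sub hg hf, ← integral_const_mul]
  exact abs_integral_le_integral_abs.trans (integral_mono (hg.sub hf).abs (hχ.const_mul ε) h)

lemma cauchySeq_integral_of_forall_abs_sub_le {μ : ℕ → Measure X} {g χ : X → ℝ}
    (hg : ∀ k, Integrable g (μ k)) (hχ : ∀ k, Integrable χ (μ k))
    (hχ_bdd : BddAbove (range fun k => ∫ x, χ x ∂μ k))
    (happrox : ∀ ε > 0, ∃ f : X → ℝ, (∀ k, Integrable f (μ k)) ∧
      CauchySeq (fun k => ∫ x, f x ∂μ k) ∧ ∀ x, |g x - f x| ≤ ε * χ x) :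
    CauchySeq fun k => ∫ x, g x ∂μ k := by
  obtain ⟨B, hB⟩ := hχ_bdd
  have hB1 : 0 < max B 1 := lt_max_of_lt_right one_pos
  refine cauchySeq_of_forall_dist_le fun ε hε => ?_
  obtain ⟨f, hf, hfc, hgf⟩ := happrox (ε / max B 1) (by positivity)
  refine ⟨_, hfc, fun k => ?_⟩
  calc dist (∫ x, g x ∂μ k) (∫ x, f x ∂μ k)
      ≤ ε / max B 1 * ∫ x, χ x ∂μ k := abs_integral_sub_le_mul_integral (hg k) (hf k) (hχ k) hgf
    _ ≤ ε / max B 1 * max B 1 := by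
        gcongr
        exact (hB (mem_range_self k)).trans (le_max_left _ _)
    _ = ε := div_mul_cancel₀ ε hB1.ne'

variable [TopologicalSpace X] [OpensMeasurableSpace X]

theorem exists_tendsto_integral_of_cutoff_approx {Ψ : Set (X → ℝ)} {μ : ℕ → Measure X}
    [∀ k, IsFiniteMeasureOnCompacts (μ k)] (hΨ : ∀ f ∈ Ψ, Continuous f ∧ HasCompactSupport f)
    (hconv : ∀ f ∈ Ψ, ∃ L, Tendsto (fun k => ∫ x, f x ∂μ k) atTop (𝓝 L))
    {g χ : X → ℝ} (hg : Continuous g) (hgc : HasCompactSupport g) (hχ : χ ∈ Ψ)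
    (hgχ : ∀ ε > 0, ∃ f ∈ Ψ, ∀ x, |g x - f x| ≤ ε * χ x) :
    ∃ L, Tendsto (fun k => ∫ x, g x ∂μ k) atTop (𝓝 L) := by
  have hint : ∀ f ∈ Ψ, ∀ k, Integrable f (μ k) := fun f hf _ =>
    (hΨ f hf).1.integrable_of_hasCompactSupport (hΨ f hf).2
  refine cauchySeq_tendsto_of_complete <| cauchySeq_integral_of_forall_abs_sub_le
    (fun _ => hg.integrable_of_hasCompactSupport hgc) (hint χ hχ)
    (hconv χ hχ).choose_spec.bddAbove_range fun ε hε => ?_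
  obtain ⟨f, hf, hgf⟩ := hgχ ε hε
  exact ⟨f, hint f hf, (hconv f hf).choose_spec.cauchySeq, hgf⟩

theorem exists_regular_tendsto_integral_of_forall_exists_tendsto
    [T2Space X] [LocallyCompactSpace X] [BorelSpace X] {μ : ℕ → Measure X}
    [∀ k, IsFiniteMeasureOnCompacts (μ k)]
    (h : ∀ f : C_c(X, ℝ), ∃ L, Tendsto (fun k => ∫ x, f x ∂μ k) atTop (𝓝 L)) :
    ∃ ν : Measure X, ν.Regular ∧
      ∀ f : C_c(X, ℝ), Tendsto (fun k => ∫ x, f x ∂μ k) atTop (𝓝 (∫ x, f x ∂ν)) := by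
  choose L hL using h
  let Λ : C_c(X, ℝ) →ₚ[ℝ] ℝ := PositiveLinearMap.mk₀
    { toFun := L
      map_add' := fun f g => tendsto_nhds_unique (hL (f + g)) <|
        ((hL f).add (hL g)).congr fun k => (integral_add f.integrable g.integrable).symm
      map_smul' := fun c f => tendsto_nhds_unique (hL (c • f)) <|
        ((hL f).const_mul c).congr fun k => (integral_const_mul c _).symm }
    fun f hf => ge_of_tendsto' (hL f) fun k => integral_nonneg hf
  refine ⟨RealRMK.rieszMeasure Λ, inferInstance, fun f => ?_⟩
  rw [RealRMK.integral_rieszMeasure]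
  exact hL f

end Integrals

theorem exists_countable_dense_family_vague_limit_general
    {X : Type*} [MetricSpace X] [TopologicalSpace.SeparableSpace X]
    [LocallyCompactSpace X] [MeasurableSpace X] [BorelSpace X] :
    ∃ Ψ : Set (X → ℝ), Ψ.Countable ∧
      (∀ f ∈ Ψ, Continuous f ∧ HasCompactSupport f) ∧
      (∀ g : X → ℝ, Continuous g → HasCompactSupport g → ∀ ε : ℝ, 0 < ε →
        ∃ f ∈ Ψ, ∀ x : X, |g x - f x| ≤ ε) ∧
      (∀ μ : ℕ → Measure X, (∀ k, IsLocallyFiniteMeasure (μ k)) →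
        (∀ f ∈ Ψ, ∃ L : ℝ, Tendsto (fun k => ∫ x, f x ∂(μ k)) atTop (𝓝 L)) →
        ∃ ν : Measure X, IsLocallyFiniteMeasure ν ∧
          ∀ g : X → ℝ, Continuous g → HasCompactSupport g →
            Tendsto (fun k => ∫ x, g x ∂(μ k)) atTop (𝓝 (∫ x, g x ∂ν))) := by
  have : SecondCountableTopology X := UniformSpace.secondCountable_of_separable X
  obtain ⟨Ψ, hΨc, hΨ, happrox⟩ := exists_countable_cutoff_approximating_set (X := X)
  refine ⟨Ψ, hΨc, hΨ, fun g hg hgc ε hε => ?_, fun μ _ hconv => ?_⟩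
  · obtain ⟨χ, -, hχ1, hgχ⟩ := happrox g hg hgc
    obtain ⟨f, hf, hgf⟩ := hgχ ε hε
    exact ⟨f, hf, fun x => (hgf x).trans (mul_le_of_le_one_right hε.le (hχ1 x))⟩
  · have hlim (g : C_c(X, ℝ)) : ∃ L, Tendsto (fun k => ∫ x, g x ∂μ k) atTop (𝓝 L) := by
      obtain ⟨χ, hχ, -, hgχ⟩ := happrox g g.continuous g.hasCompactSupport
      exact exists_tendsto_integral_of_cutoff_approx hΨ hconv g.continuous g.hasCompactSupport hχ hgχ
    obtain ⟨ν, _, hν⟩ := exists_regular_tendsto_integral_of_forall_exists_tendsto hlim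
    exact ⟨ν, inferInstance, fun g hg hgc => hν ⟨⟨g, hg⟩, hgc⟩⟩

/-- **A countable sup-norm dense family in `C_c(X)` detecting vague convergence.**  In a
locally compact complete separable metric space `X` there is a countable set `Ψ` of
compactly supported continuous functions, dense (in sup norm) among all compactly
supported continuous functions, such that whenever `(μ_k)` are locally finite Borel
measures with `∫ f dμ_k` convergent for every `f ∈ Ψ`, the sequence `μ_k` converges
vaguely to some locally finite Borel measure. -/
theorem exists_countable_dense_family_vague_limit
    {X : Type*} [MetricSpace X] [CompleteSpace X] [TopologicalSpace.SeparableSpace X]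
    [LocallyCompactSpace X] [MeasurableSpace X] [BorelSpace X] :
    ∃ Ψ : Set (X → ℝ), Ψ.Countable ∧
      (∀ f ∈ Ψ, Continuous f ∧ HasCompactSupport f) ∧
      (∀ g : X → ℝ, Continuous g → HasCompactSupport g → ∀ ε : ℝ, 0 < ε →
        ∃ f ∈ Ψ, ∀ x : X, |g x - f x| ≤ ε) ∧
      (∀ μ : ℕ → Measure X, (∀ k, IsLocallyFiniteMeasure (μ k)) →
        (∀ f ∈ Ψ, ∃ L : ℝ, Tendsto (fun k => ∫ x, f x ∂(μ k)) atTop (𝓝 L)) →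
        ∃ ν : Measure X, IsLocallyFiniteMeasure ν ∧
          ∀ g : X → ℝ, Continuous g → HasCompactSupport g →
            Tendsto (fun k => ∫ x, g x ∂(μ k)) atTop (𝓝 (∫ x, g x ∂ν))) :=
  exists_countable_dense_family_vague_limit_general
end

section
/- Let X be a complete separable metric space, K ⊆ X a compact subset, and Ψ ⊆ C(K, ℝ) a countable subset dense with respect to the supremum norm. Let (μ_k) be a sequence of random finite Borel measures on K on a probability space (Ω, 𝒜, P), and for each f ∈ Ψ let S(f) be a random variable with |S(f)| < ∞ almost surely such that ∫ f dμ_k converges to S(f) in probability as k → ∞. Then there exists a random finite Borel measure μ on K such that μ_k weakly converges to μ subsequentially in probability. -/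
/-!
Borel–Cantelli along a diagonal subsequence turns the countably many convergences in probability
into almost sure convergence along a single subsequence. On that event the total masses are
bounded, so the integration functionals are equi-Lipschitz on `C(K, ℝ)` and convergence spreads
from the dense family `Ψ` to every continuous function; the Riesz–Markov–Kakutani theorem
represents the limit functional by a finite measure `μ ω`. Integrals against `μ ω` are pointwise
limits of measurable functions of `ω`, which makes `μ` a random measure. Along any further
subsequence the same density argument identifies the limit with `μ ω`.
-/

open MeasureTheory Filter Set Topology
open scoped NNReal ENNReal CompactlySupported BoundedContinuousFunction

/-- A sequence of random Borel measures `μs` *weakly converges to `μ` subsequentially in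
probability*: every subsequence has a further subsequence along which, on a single event
of full probability, the measures converge weakly (integrals of every bounded continuous
function converge). -/
def WeakSubseqInProb {X : Type*} [TopologicalSpace X] [MeasurableSpace X]
    {Ω : Type*} [MeasurableSpace Ω] (P : Measure Ω)
    (μs : ℕ → Ω → Measure X) (μ : Ω → Measure X) : Prop :=
  ∀ α : ℕ → ℕ, StrictMono α →
    ∃ β : ℕ → ℕ, StrictMono β ∧ Set.range β ⊆ Set.range α ∧
      ∃ H : Set Ω, MeasurableSet H ∧ P H = 1 ∧
        ∀ ω ∈ H, ∀ f : BoundedContinuousFunction X ℝ,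
          Tendsto (fun k => ∫ x, f x ∂(μs (β k) ω)) atTop (𝓝 (∫ x, f x ∂(μ ω)))

theorem EquicontinuousAt.cauchySeq_of_mem_closure {E F : Type*} [TopologicalSpace E]
    [PseudoMetricSpace F] {T : ℕ → E → F} {D : Set E} {x : E} (hT : EquicontinuousAt T x)
    (hx : x ∈ closure D) (hD : ∀ y ∈ D, CauchySeq fun k => T k y) :
    CauchySeq fun k => T k x := by
  rw [Metric.cauchySeq_iff]
  intro ε hε
  obtain ⟨y, hyT, hyD⟩ :=
    ((Metric.equicontinuousAt_iff_right.1 hT (ε / 3) (by positivity)).and_frequently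
      (mem_closure_iff_frequently.1 hx)).exists
  obtain ⟨N, hN⟩ := Metric.cauchySeq_iff.1 (hD y hyD) (ε / 3) (by positivity)
  refine ⟨N, fun m hm n hn => ?_⟩
  calc dist (T m x) (T n x)
      ≤ dist (T m x) (T m y) + dist (T m y) (T n y) + dist (T n y) (T n x) :=
        dist_triangle4 _ _ _ _
    _ < ε / 3 + ε / 3 + ε / 3 := by
        gcongr
        exacts [hyT m, hN m hm n hn, dist_comm (T n x) (T n y) ▸ hyT n]
    _ = ε := by ring

section Compact

variable {Z : Type*} [TopologicalSpace Z] [CompactSpace Z] [MeasurableSpace Z]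
  [OpensMeasurableSpace Z]

theorem ContinuousMap.integrable (ρ : Measure Z) [IsFiniteMeasure ρ] (f : C(Z, ℝ)) :
    Integrable f ρ :=
  f.continuous.integrable_of_hasCompactSupport (HasCompactSupport.of_compactSpace f)

theorem dist_integral_le_mul_dist (ρ : Measure Z) [IsFiniteMeasure ρ] (f g : C(Z, ℝ)) :
    dist (∫ x, f x ∂ρ) (∫ x, g x ∂ρ) ≤ ρ.real univ * dist f g := by
  rw [dist_eq_norm, ← integral_sub (f.integrable ρ) (g.integrable ρ), dist_eq_norm, mul_comm]
  exact norm_integral_le_of_norm_le_const (ae_of_all _ fun x => (f - g).norm_coe_le_norm x)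

theorem lipschitzWith_integral {ρ : Measure Z} [IsFiniteMeasure ρ] {C : ℝ≥0}
    (hC : ρ.real univ ≤ C) : LipschitzWith C fun f : C(Z, ℝ) => ∫ x, f x ∂ρ :=
  LipschitzWith.of_dist_le_mul fun f g =>
    (dist_integral_le_mul_dist ρ f g).trans (mul_le_mul_of_nonneg_right hC dist_nonneg)

variable {ρ : ℕ → Measure Z} [∀ k, IsFiniteMeasure (ρ k)] {D : Set C(Z, ℝ)}

/-- Testing against a function of `D` uniformly close to `1` bounds the total masses. -/
theorem exists_measureReal_univ_le_of_dense (hD : Dense D)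
    (h : ∀ f ∈ D, ∃ l, Tendsto (fun k => ∫ x, f x ∂ρ k) atTop (𝓝 l)) :
    ∃ C : ℝ≥0, ∀ k, (ρ k).real univ ≤ C := by
  obtain ⟨f, hfD, hf⟩ := hD.exists_dist_lt (1 : C(Z, ℝ)) (half_pos one_pos)
  obtain ⟨l, hl⟩ := h f hfD
  obtain ⟨B, hB⟩ := hl.bddAbove_range
  refine ⟨(2 * B).toNNReal, fun k => le_trans ?_ (Real.le_coe_toNNReal _)⟩
  have hdist := dist_integral_le_mul_dist (ρ k) 1 f
  have hmass : ∫ x, (1 : C(Z, ℝ)) x ∂ρ k = (ρ k).real univ := by simp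
  rw [hmass, Real.dist_eq] at hdist
  have := hB (mem_range_self k)
  have := mul_le_mul_of_nonneg_left hf.le (measureReal_nonneg (μ := ρ k) (s := univ))
  linarith [le_abs_self ((ρ k).real univ - ∫ x, f x ∂ρ k)]

theorem uniformEquicontinuous_integral_of_dense (hD : Dense D)
    (h : ∀ f ∈ D, ∃ l, Tendsto (fun k => ∫ x, f x ∂ρ k) atTop (𝓝 l)) :
    UniformEquicontinuous fun k (f : C(Z, ℝ)) => ∫ x, f x ∂ρ k :=
  let ⟨C, hC⟩ := exists_measureReal_univ_le_of_dense hD h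
  LipschitzWith.uniformEquicontinuous _ C fun k => lipschitzWith_integral (hC k)

theorem exists_tendsto_integral_of_dense (hD : Dense D)
    (h : ∀ f ∈ D, ∃ l, Tendsto (fun k => ∫ x, f x ∂ρ k) atTop (𝓝 l)) (f : C(Z, ℝ)) :
    ∃ l, Tendsto (fun k => ∫ x, f x ∂ρ k) atTop (𝓝 l) := by
  have hequi := (uniformEquicontinuous_integral_of_dense hD h).equicontinuous f
  refine cauchySeq_tendsto_of_complete (hequi.cauchySeq_of_mem_closure (hD f) fun g hg => ?_)
  obtain ⟨l, hl⟩ := h g hg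
  exact hl.cauchySeq

theorem tendsto_integral_of_dense {m : Measure Z} [IsFiniteMeasure m] (hD : Dense D)
    (h : ∀ f ∈ D, Tendsto (fun k => ∫ x, f x ∂ρ k) atTop (𝓝 (∫ x, f x ∂m)))
    (f : C(Z, ℝ)) : Tendsto (fun k => ∫ x, f x ∂ρ k) atTop (𝓝 (∫ x, f x ∂m)) := by
  have hclosed := (uniformEquicontinuous_integral_of_dense hD fun f hf => ⟨_, h f hf⟩)
    |>.equicontinuous.isClosed_setOfPred_tendsto (l := atTop)
      (lipschitzWith_integral (Real.le_coe_toNNReal (m.real univ))).continuous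
  exact closure_minimal h hclosed (hD f)

end Compact

theorem exists_integral_eq_of_tendsto {Z : Type*} [TopologicalSpace Z] [CompactSpace Z]
    [T2Space Z] [MeasurableSpace Z] [BorelSpace Z] {ρ : ℕ → Measure Z}
    [∀ k, IsFiniteMeasure (ρ k)] {L : C(Z, ℝ) → ℝ}
    (h : ∀ f, Tendsto (fun k => ∫ x, f x ∂ρ k) atTop (𝓝 (L f))) :
    ∃ m : Measure Z, IsFiniteMeasure m ∧ ∀ f : C(Z, ℝ), ∫ x, f x ∂m = L f := by
  let Λ : C_c(Z, ℝ) →ₚ[ℝ] ℝ := PositiveLinearMap.mk₀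
    (linearMapOfTendsto (fun f : C_c(Z, ℝ) => L f)
      (fun k => (CompactlySupportedContinuousMap.integralPositiveLinearMap (ρ k)).toLinearMap)
      (tendsto_pi_nhds.2 fun f => h f))
    fun f hf => ge_of_tendsto' (h f) fun k => integral_nonneg hf
  refine ⟨RealRMK.rieszMeasure Λ, inferInstance, fun f => ?_⟩
  exact RealRMK.integral_rieszMeasure Λ (CompactlySupportedContinuousMap.continuousMapEquiv f)

theorem exists_subseq_forall_tendsto_ae {α E : Type*} [MeasurableSpace α] {μ : Measure α}
    [PseudoEMetricSpace E] {f : ℕ → ℕ → α → E} {g : ℕ → α → E}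
    (h : ∀ n, TendstoInMeasure μ (f n) atTop (g n)) {φ : ℕ → ℕ} (hφ : StrictMono φ) :
    ∃ ψ : ℕ → ℕ, StrictMono ψ ∧ range ψ ⊆ range φ ∧
      ∀ᵐ x ∂μ, ∀ n, Tendsto (fun k => f n (ψ k) x) atTop (𝓝 (g n x)) := by
  have hpos : ∀ k : ℕ, 0 < (2⁻¹ : ℝ≥0∞) ^ k := fun k => ENNReal.pow_pos (by simp) k
  have hev : ∀ k, ∀ᶠ j in atTop, ∀ n ∈ Finset.Iic k,
      μ {x | 2⁻¹ ^ k ≤ edist (f n (φ j) x) (g n x)} ≤ 2⁻¹ ^ k := fun k =>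
    (eventually_all_finset _).2 fun n _ =>
      ((h n _ (hpos k)).comp hφ.tendsto_atTop).eventually (eventually_le_nhds (hpos k))
  obtain ⟨ns, hns, hbound⟩ := extraction_forall_of_eventually hev
  refine ⟨φ ∘ ns, hφ.comp hns, range_comp_subset_range _ _, ae_all_iff.2 fun n => ?_⟩
  -- Borel–Cantelli for the bad events `s k`, which are only controlled from `k = n` on.
  set s : ℕ → Set α := fun k => {x | n ≤ k ∧ 2⁻¹ ^ k ≤ edist (f n (φ (ns k)) x) (g n x)}
  have hs : ∀ k, μ (s k) ≤ 2⁻¹ ^ k := by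
    intro k
    by_cases hnk : n ≤ k
    · exact (measure_mono fun x hx => hx.2).trans (hbound k n (Finset.mem_Iic.2 hnk))
    · simp [s, hnk]
  have hgeom : ∑' k : ℕ, (2⁻¹ : ℝ≥0∞) ^ k ≠ ∞ := by
    rw [ENNReal.tsum_geometric, ENNReal.one_sub_inv_two, inv_inv]
    exact ENNReal.ofNat_ne_top
  have hsum : ∑' k, μ (s k) ≠ ∞ := ne_top_of_le_ne_top hgeom (ENNReal.tsum_le_tsum hs)
  filter_upwards [ae_eventually_notMem hsum] with x hx
  rw [tendsto_iff_edist_tendsto_0]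
  refine tendsto_of_tendsto_of_tendsto_of_le_of_le' tendsto_const_nhds
    (ENNReal.tendsto_pow_atTop_nhds_zero_of_lt_one ENNReal.one_half_lt_one)
    (Eventually.of_forall fun _ => zero_le) ?_
  filter_upwards [hx, eventually_ge_atTop n] with k hk hnk
  exact (not_le.1 fun hle => hk ⟨hnk, hle⟩).le

theorem Filter.Eventually.exists_measurableSet_measure_eq_one {Ω : Type*} [MeasurableSpace Ω]
    {P : Measure Ω} [IsProbabilityMeasure P] {p : Ω → Prop} (h : ∀ᵐ ω ∂P, p ω) :
    ∃ H, MeasurableSet H ∧ P H = 1 ∧ ∀ ω ∈ H, p ω :=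
  let ⟨H, hHae, hH, hp⟩ := h.exists_measurable_mem
  ⟨H, hH, (prob_compl_eq_zero_iff hH).1 (mem_ae_iff.1 hHae), hp⟩

theorem measurable_integral_of_measurable_measure {Ω Z : Type*} [MeasurableSpace Ω]
    [MeasurableSpace Z] {μ : Ω → Measure Z} (hμ : Measurable μ) {f : Z → ℝ}
    (hf : Measurable f) (hfi : ∀ ω, Integrable f (μ ω)) :
    Measurable fun ω => ∫ x, f x ∂μ ω := by
  simp_rw [integral_eq_lintegral_pos_part_sub_lintegral_neg_part (hfi _)]
  exact ((Measure.measurable_lintegral (by fun_prop)).comp hμ).ennreal_toReal.sub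
    ((Measure.measurable_lintegral (by fun_prop)).comp hμ).ennreal_toReal

/-- Thickened indicators recover the measures of closed sets, and closed sets form a
generating π-system. -/
theorem measurable_measure_of_measurable_integral {Ω Z : Type*} [MeasurableSpace Ω]
    [PseudoEMetricSpace Z] [MeasurableSpace Z] [BorelSpace Z] {μ : Ω → Measure Z}
    [∀ ω, IsFiniteMeasure (μ ω)]
    (h : ∀ f : Z →ᵇ ℝ, Measurable fun ω => ∫ x, f x ∂μ ω) : Measurable μ := by
  have hclosed : ∀ F : Set Z, IsClosed F → Measurable fun ω => μ ω F := by
    intro F hF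
    have hreal : (fun ω => μ ω F) = fun ω => ENNReal.ofReal ((μ ω).real F) :=
      funext fun ω => (ofReal_measureReal).symm
    rw [hreal]
    refine ENNReal.measurable_ofReal.comp (measurable_of_tendsto_metrizable
      (fun n => h ((thickenedIndicator (Nat.one_div_pos_of_nat (n := n)) F).comp _
        NNReal.isometry_coe.lipschitz)) (tendsto_pi_nhds.2 fun ω => ?_))
    exact tendsto_integral_thickenedIndicator_of_isClosed (μ ω) hF _
      tendsto_one_div_add_atTop_nhds_zero_nat
  exact .measure_of_isPiSystem (BorelSpace.measurable_eq.trans borel_eq_generateFrom_isClosed)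
    isPiSystem_isClosed hclosed (hclosed univ isClosed_univ)

section Random

variable {Ω Z : Type*} [MeasurableSpace Ω] [MetricSpace Z] [CompactSpace Z] [MeasurableSpace Z]
  [BorelSpace Z] {ρ : ℕ → Ω → Measure Z} [∀ k ω, IsFiniteMeasure (ρ k ω)]

theorem exists_measurable_tendsto_integral (hρ : ∀ k, Measurable (ρ k))
    (h : ∀ ω (f : C(Z, ℝ)), ∃ l, Tendsto (fun k => ∫ x, f x ∂ρ k ω) atTop (𝓝 l)) :
    ∃ μ : Ω → Measure Z, (∀ ω, IsFiniteMeasure (μ ω)) ∧ Measurable μ ∧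
      ∀ ω (f : C(Z, ℝ)), Tendsto (fun k => ∫ x, f x ∂ρ k ω) atTop (𝓝 (∫ x, f x ∂μ ω)) := by
  choose L hL using h
  choose μ hμfin hμ using fun ω => exists_integral_eq_of_tendsto (hL ω)
  refine ⟨μ, hμfin, measurable_measure_of_measurable_integral fun f => ?_,
    fun ω f => (hμ ω f).symm ▸ hL ω f⟩
  rw [show (fun ω => ∫ x, f x ∂μ ω) = fun ω => L ω f.toContinuousMap from
    funext fun ω => hμ ω _]
  exact measurable_of_tendsto_metrizable
    (fun k => measurable_integral_of_measurable_measure (hρ k) f.continuous.measurable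
      fun ω => f.toContinuousMap.integrable _)
    (tendsto_pi_nhds.2 fun ω => hL ω f.toContinuousMap)

theorem exists_measurable_tendsto_integral_on (hρ : ∀ k, Measurable (ρ k)) {H : Set Ω}
    (hH : MeasurableSet H)
    (h : ∀ ω ∈ H, ∀ f : C(Z, ℝ), ∃ l, Tendsto (fun k => ∫ x, f x ∂ρ k ω) atTop (𝓝 l)) :
    ∃ μ : Ω → Measure Z, (∀ ω, IsFiniteMeasure (μ ω)) ∧ Measurable μ ∧
      ∀ ω ∈ H, ∀ f : C(Z, ℝ),
        Tendsto (fun k => ∫ x, f x ∂ρ k ω) atTop (𝓝 (∫ x, f x ∂μ ω)) := by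
  classical
  -- Off `H` the sequence is replaced by zero, so that integrals converge at every `ω`.
  set ρ' : ℕ → Ω → Measure Z := fun k => H.piecewise (ρ k) 0
  have : ∀ k ω, IsFiniteMeasure (ρ' k ω) := fun k ω => by
    by_cases hω : ω ∈ H
    · rw [show ρ' k ω = ρ k ω from H.piecewise_eq_of_mem _ _ hω]; infer_instance
    · rw [show ρ' k ω = 0 from H.piecewise_eq_of_notMem _ _ hω]; infer_instance
  obtain ⟨μ, hμfin, hμ, hlim⟩ := exists_measurable_tendsto_integral (ρ := ρ')
    (fun k => (hρ k).piecewise hH measurable_const) fun ω f => by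
      by_cases hω : ω ∈ H
      · simpa only [ρ', H.piecewise_eq_of_mem _ _ hω] using h ω hω f
      · simp only [ρ', H.piecewise_eq_of_notMem _ _ hω, Pi.zero_apply, integral_zero_measure]
        exact ⟨0, tendsto_const_nhds⟩
  exact ⟨μ, hμfin, hμ, fun ω hω f => by
    simpa only [ρ', H.piecewise_eq_of_mem _ _ hω] using hlim ω f⟩

end Random

theorem random_measures_weak_subseq_limit_of_dense_convergence_general
    {X : Type*} [MetricSpace X]
    [MeasurableSpace X] [BorelSpace X]
    (K : Set X) (hK : IsCompact K)
    {Ω : Type*} [MeasurableSpace Ω] (P : Measure Ω) [IsProbabilityMeasure P]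
    (Ψ : Set C(↥K, ℝ)) (hΨcount : Ψ.Countable) (hΨdense : Dense Ψ)
    (μs : ℕ → Ω → Measure ↥K)
    (hfin : ∀ k ω, IsFiniteMeasure (μs k ω))
    (hmeas : ∀ (k : ℕ) (E : Set ↥K), MeasurableSet E → Measurable fun ω => μs k ω E)
    (S : C(↥K, ℝ) → Ω → ℝ)
    (hconv : ∀ f ∈ Ψ,
      TendstoInMeasure P (fun k ω => ∫ x, f x ∂(μs k ω)) atTop (S f)) :
    ∃ μ : Ω → Measure ↥K,
      (∀ ω, IsFiniteMeasure (μ ω)) ∧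
      (∀ E : Set ↥K, MeasurableSet E → Measurable fun ω => μ ω E) ∧
      WeakSubseqInProb P μs μ := by
  have : CompactSpace K := isCompact_iff_compactSpace.mp hK
  have := hfin
  obtain ⟨ψ, rfl⟩ := hΨcount.exists_eq_range hΨdense.nonempty
  have hconvψ : ∀ n, TendstoInMeasure P (fun k ω => ∫ x, ψ n x ∂μs k ω) atTop (S (ψ n)) :=
    fun n => hconv _ (mem_range_self n)
  obtain ⟨β₀, -, -, hae₀⟩ := exists_subseq_forall_tendsto_ae hconvψ strictMono_id
  obtain ⟨H₀, hH₀ae, hH₀, hconv₀⟩ := hae₀.exists_measurable_mem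
  obtain ⟨μ, hμfin, hμ, hlim⟩ := exists_measurable_tendsto_integral_on
    (fun k => Measure.measurable_of_measurable_coe _ (hmeas (β₀ k))) hH₀ fun ω hω =>
      exists_tendsto_integral_of_dense hΨdense (by
        rintro _ ⟨n, rfl⟩
        exact ⟨_, hconv₀ ω hω n⟩)
  refine ⟨μ, hμfin, fun E hE => (Measure.measurable_coe hE).comp hμ, fun α hα => ?_⟩
  obtain ⟨β, hβ, hβα, hae⟩ := exists_subseq_forall_tendsto_ae hconvψ hα
  obtain ⟨H, hH, hPH, hconvH⟩ := (hae.and hH₀ae).exists_measurableSet_measure_eq_one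
  refine ⟨β, hβ, hβα, H, hH, hPH, fun ω hω g => ?_⟩
  obtain ⟨hconvβ, hω₀⟩ := hconvH ω hω
  have := hμfin ω
  refine tendsto_integral_of_dense hΨdense ?_ g.toContinuousMap
  rintro _ ⟨n, rfl⟩
  rw [tendsto_nhds_unique (hlim ω hω₀ (ψ n)) (hconv₀ ω hω₀ n)]
  exact hconvβ n

/-- **Representation theorem for random measures on a compact set.**  Let `K ⊆ X` be
compact, `Ψ` a countable sup-norm dense family of continuous functions on `K`, and
`(μ_k)` random finite Borel measures on `K` such that for each `f ∈ Ψ` the integrals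
`∫ f dμ_k` converge in probability to an (a.s. finite, here real-valued) random variable
`S f`.  Then `μ_k` weakly converges subsequentially in probability to some random finite
Borel measure `μ`. -/
theorem random_measures_weak_subseq_limit_of_dense_convergence
    {X : Type*} [MetricSpace X] [CompleteSpace X] [TopologicalSpace.SeparableSpace X]
    [MeasurableSpace X] [BorelSpace X]
    (K : Set X) (hK : IsCompact K)
    {Ω : Type*} [MeasurableSpace Ω] (P : Measure Ω) [IsProbabilityMeasure P]
    (Ψ : Set C(↥K, ℝ)) (hΨcount : Ψ.Countable) (hΨdense : Dense Ψ)
    (μs : ℕ → Ω → Measure ↥K)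
    (hfin : ∀ k ω, IsFiniteMeasure (μs k ω))
    (hmeas : ∀ (k : ℕ) (E : Set ↥K), MeasurableSet E → Measurable fun ω => μs k ω E)
    (S : C(↥K, ℝ) → Ω → ℝ)
    (hSmeas : ∀ f ∈ Ψ, Measurable (S f))
    (hconv : ∀ f ∈ Ψ,
      TendstoInMeasure P (fun k ω => ∫ x, f x ∂(μs k ω)) atTop (S f)) :
    ∃ μ : Ω → Measure ↥K,
      (∀ ω, IsFiniteMeasure (μ ω)) ∧
      (∀ E : Set ↥K, MeasurableSet E → Measurable fun ω => μ ω E) ∧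
      WeakSubseqInProb P μs μ :=
  random_measures_weak_subseq_limit_of_dense_convergence_general K hK P Ψ hΨcount hΨdense μs hfin
    hmeas S hconv
end

section
/- Let X be a complete separable metric space and, for every i ∈ ℕ, let μ^i and (μ_k^i)_{k∈ℕ} be random finite Borel measures on X on a probability space (Ω, 𝒜, P) such that μ_k^i weakly converges to μ^i subsequentially in probability as k → ∞, for every i. Assume that for every ε > 0 there exist N, n₀ ∈ ℕ such that Σ_{i≥N} E(μ_k^i(X)) < ε for every k ≥ n₀. Then there exists n₁ ∈ ℕ such that for every k ≥ n₁ the sum Σ_{i∈ℕ} μ_k^i is almost surely a finite Borel measure (hence a random finite Borel measure), Σ_{i∈ℕ} μ^i is almost surely a finite Borel measure, and the sequence (Σ_{i∈ℕ} μ_k^i)_{k≥n₁} weakly converges to Σ_{i∈ℕ} μ^i subsequentially in probability. -/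
/-!
Along a diagonal subsequence on which every `μs i` converges weakly almost surely, Fatou's lemma
bounds the expected tail of `∑ i, μ i (X)`, so the limit sum is a.s. finite. Choose cut-offs `N j`
with expected tail `∑_{i ≥ N j} μs i (X)` at most `4⁻ʲ`; by Markov and Borel–Cantelli a further
subsequence makes this tail, and the excess `∑_{i < N j} (μs i (X) - μ i (X))⁺`, a.s. eventually
at most `2⁻ʲ`. Together with the a.s. finiteness of the limit sum this makes the tails
`∑_{i ≥ n} μs i (X)` uniformly small for large `n`, and weak convergence of the sums follows from
the termwise one by an `ε/3` argument.
-/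

open MeasureTheory Filter Set Topology
open scoped ENNReal BoundedContinuousFunction

section Subsequence

theorem StrictMono.exists_comp_eq_of_range_subset {ι κ α : Type*} [Preorder ι] [LinearOrder κ]
    [Preorder α] {β : κ → α} {γ : ι → α} (hβ : StrictMono β) (hγ : StrictMono γ)
    (h : range γ ⊆ range β) : ∃ σ : ι → κ, StrictMono σ ∧ γ = β ∘ σ := by
  choose σ hσ using fun k => h (mem_range_self k)
  refine ⟨σ, fun a b hab => hβ.lt_iff_lt.1 ?_, funext fun k => (hσ k).symm⟩
  rw [hσ, hσ]
  exact hγ hab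

theorem Filter.Tendsto.comp_of_eventually_mem_range {T : Type*} {u : ℕ → T} {l : Filter T}
    {β γ : ℕ → ℕ} (h : Tendsto (fun m => u (β m)) atTop l) (hγ : Tendsto γ atTop atTop)
    (hγβ : ∀ᶠ k in atTop, γ k ∈ range β) : Tendsto (fun k => u (γ k)) atTop l := by
  intro s hs
  show ∀ᶠ k in atTop, u (γ k) ∈ s
  obtain ⟨M, hM⟩ := eventually_atTop.1 (h hs)
  filter_upwards [hγβ, hγ.eventually_gt_atTop ((Finset.range M).sup β)] with k ⟨m, hm⟩ hk
  -- `γ k = β m` exceeds `β` on `[0, M)`, so `m ≥ M`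
  have hMm : M ≤ m := by
    by_contra! hmM
    exact (Finset.le_sup (f := β) (Finset.mem_range.2 hmM)).not_gt (hm ▸ hk)
  simpa [← hm] using hM m hMm

theorem exists_diagonal_subseq {p : ℕ → (ℕ → ℕ) → Prop}
    (hp : ∀ i (β γ : ℕ → ℕ), p i β → Tendsto γ atTop atTop → (∀ᶠ k in atTop, γ k ∈ range β) → p i γ)
    (h : ∀ i (α : ℕ → ℕ), StrictMono α → ∃ β, StrictMono β ∧ range β ⊆ range α ∧ p i β)
    {α : ℕ → ℕ} (hα : StrictMono α) :
    ∃ δ, StrictMono δ ∧ range δ ⊆ range α ∧ ∀ i, p i δ := by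
  have step : ∀ i (a : {β : ℕ → ℕ // StrictMono β}),
      ∃ b : {β : ℕ → ℕ // StrictMono β}, range b.1 ⊆ range a.1 ∧ p i b.1 := fun i a =>
    let ⟨β, hβ, hβa, hpβ⟩ := h i a.1 a.2
    ⟨⟨β, hβ⟩, hβa, hpβ⟩
  choose next hnext_range hnext_p using step
  let g : ℕ → {β : ℕ → ℕ // StrictMono β} := fun j => Nat.rec ⟨α, hα⟩ next j
  have hg : Antitone fun j => range (g j).1 :=
    antitone_nat_of_succ_le fun j => hnext_range j (g j)
  have hle : ∀ j k, (g j).1 k ≤ (g (j + 1)).1 k := fun j k => by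
    obtain ⟨σ, hσ, heq⟩ := (g j).2.exists_comp_eq_of_range_subset (g (j + 1)).2
      (hnext_range j (g j))
    rw [heq]
    exact (g j).2.monotone hσ.le_apply
  have hδ : StrictMono fun k => (g (k + 1)).1 k :=
    strictMono_nat_of_lt_succ fun k =>
      ((g (k + 1)).2 (Nat.lt_add_one k)).trans_le (hle (k + 1) (k + 1))
  refine ⟨_, hδ, ?_, fun i => hp i _ _ (hnext_p i (g i)) hδ.tendsto_atTop ?_⟩
  · rintro _ ⟨k, rfl⟩
    exact hg (Nat.zero_le (k + 1)) ⟨k, rfl⟩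
  · filter_upwards [eventually_ge_atTop i] with k hk
    exact hg (by omega : i + 1 ≤ k + 1) ⟨k, rfl⟩

end Subsequence

section Probability

variable {Ω : Type*} [MeasurableSpace Ω] {P : Measure Ω}

theorem ae_iff_exists_measurableSet_prob_one [IsProbabilityMeasure P] {p : Ω → Prop} :
    (∀ᵐ ω ∂P, p ω) ↔ ∃ H, MeasurableSet H ∧ P H = 1 ∧ ∀ ω ∈ H, p ω := by
  constructor
  · intro h
    obtain ⟨H, hH, hHm, hHp⟩ := h.exists_measurable_mem
    exact ⟨H, hHm, (prob_compl_eq_zero_iff hHm).1 (mem_ae_iff.1 hH), hHp⟩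
  · rintro ⟨H, hHm, hH1, hHp⟩
    exact mem_of_superset (mem_ae_iff.2 ((prob_compl_eq_zero_iff hHm).2 hH1)) hHp

theorem tendsto_measure_le_of_ae_tendsto_zero [IsFiniteMeasure P] {g : ℕ → Ω → ℝ≥0∞}
    (hg : ∀ m, Measurable (g m)) (h : ∀ᵐ ω ∂P, Tendsto (fun m => g m ω) atTop (𝓝 0))
    {ε : ℝ≥0∞} (hε : 0 < ε) : Tendsto (fun m => P {ω | ε ≤ g m ω}) atTop (𝓝 0) := by
  have hlim := tendsto_measure_of_ae_tendsto_indicator_of_isFiniteMeasure atTop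
    (As := fun m => {ω | ε ≤ g m ω}) (μ := P) MeasurableSet.empty
    (fun m => measurableSet_le measurable_const (hg m)) ?_
  · simpa using hlim
  filter_upwards [h] with ω hω
  filter_upwards [hω.eventually_lt_const hε] with m hm
  simpa using hm

theorem exists_strictMono_ae_eventually_notMem {B : ℕ → ℕ → Set Ω} {ε : ℕ → ℝ≥0∞}
    (hε : ∑' j, ε j ≠ ∞) (hB : ∀ j, ∀ᶠ m in atTop, P (B j m) ≤ ε j) :
    ∃ φ : ℕ → ℕ, StrictMono φ ∧ ∀ᵐ ω ∂P, ∀ᶠ j in atTop, ω ∉ B j (φ j) := by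
  obtain ⟨φ, hφ, hle⟩ := extraction_forall_of_eventually hB
  exact ⟨φ, hφ, ae_eventually_notMem (ne_top_of_le_ne_top hε (ENNReal.tsum_le_tsum hle))⟩

end Probability

section Series

theorem ENNReal.tsum_nat_add_antitone (f : ℕ → ℝ≥0∞) : Antitone fun n => ∑' i, f (i + n) :=
  antitone_nat_of_succ_le fun n => by
    simpa only [add_assoc, add_comm 1 n] using
      ENNReal.tsum_comp_le_tsum_of_injective (add_left_injective 1) fun j => f (j + n)

theorem ENNReal.tsum_ne_top_of_nat_add {f : ℕ → ℝ≥0∞} (hf : ∀ i, f i ≠ ∞) (n : ℕ)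
    (h : ∑' i, f (i + n) ≠ ∞) : ∑' i, f i ≠ ∞ := by
  rw [← ENNReal.summable.sum_add_tsum_nat_add' (k := n)]
  exact ENNReal.add_ne_top.2 ⟨ENNReal.sum_ne_top.2 fun i _ => hf i, h⟩

theorem ENNReal.tsum_nat_add_le_of_head_tail (c d : ℕ → ℝ≥0∞) (n N : ℕ) :
    ∑' i, c (i + n) ≤ ∑' i, d (i + n) + ∑ i ∈ Finset.range N, (c i - d i) + ∑' i, c (i + N) := by
  rcases le_total N n with hNn | hnN
  · exact (ENNReal.tsum_nat_add_antitone c hNn).trans le_add_self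
  obtain ⟨M, rfl⟩ := Nat.exists_eq_add_of_le hnN
  have hhead : ∑ i ∈ Finset.range M, c (i + n)
      ≤ ∑' i, d (i + n) + ∑ i ∈ Finset.range (n + M), (c i - d i) :=
    calc ∑ i ∈ Finset.range M, c (i + n)
        ≤ ∑ i ∈ Finset.range M, (d (i + n) + (c (i + n) - d (i + n))) :=
          Finset.sum_le_sum fun i _ => le_add_tsub
      _ = ∑ i ∈ Finset.range M, d (i + n) + ∑ i ∈ Finset.range M, (c (n + i) - d (n + i)) := by
          simp only [Finset.sum_add_distrib, add_comm n]
      _ ≤ ∑' i, d (i + n) + ∑ i ∈ Finset.range (n + M), (c i - d i) := by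
          rw [Finset.sum_range_add]
          exact add_le_add (ENNReal.sum_le_tsum _) le_add_self
  calc ∑' i, c (i + n)
      = ∑ i ∈ Finset.range M, c (i + n) + ∑' i, c (i + (n + M)) := by
        rw [← ENNReal.summable.sum_add_tsum_nat_add' (f := fun i => c (i + n)) (k := M)]
        simp only [add_assoc, add_comm M n]
    _ ≤ _ := add_le_add_left hhead _

theorem ENNReal.eventually_tsum_nat_add_lt {c : ℕ → ℕ → ℝ≥0∞} {d : ℕ → ℝ≥0∞} {N : ℕ → ℕ}
    {η : ℕ → ℝ≥0∞} (hd : ∑' i, d i ≠ ∞) (hη : Tendsto η atTop (𝓝 0))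
    (hhead : ∀ᶠ k in atTop, ∑ i ∈ Finset.range (N k), (c i k - d i) ≤ η k)
    (htail : ∀ᶠ k in atTop, ∑' i, c (i + N k) k ≤ η k) {ε : ℝ≥0∞} (hε : 0 < ε) :
    ∀ᶠ n in atTop, ∀ᶠ k in atTop, ∑' i, c (i + n) k < ε := by
  have hε2 : 0 < ε / 2 := ENNReal.half_pos hε.ne'
  have h2η : Tendsto (fun k => η k + η k) atTop (𝓝 0) := by simpa using hη.add hη
  filter_upwards [(ENNReal.tendsto_sum_nat_add d hd).eventually_lt_const hε2] with n hn
  filter_upwards [hhead, htail, h2η.eventually_lt_const hε2] with k hk_head hk_tail hk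
  calc ∑' i, c (i + n) k
      ≤ ∑' i, d (i + n) + ∑ i ∈ Finset.range (N k), (c i k - d i) + ∑' i, c (i + N k) k :=
        ENNReal.tsum_nat_add_le_of_head_tail (c · k) d n (N k)
    _ ≤ ∑' i, d (i + n) + (η k + η k) := by
        rw [add_assoc]
        gcongr
    _ < ε / 2 + ε / 2 := ENNReal.add_lt_add hn hk
    _ = ε := ENNReal.add_halves ε

theorem ENNReal.tsum_liminf_le_liminf_tsum (c : ℕ → ℕ → ℝ≥0∞) :
    ∑' i, liminf (fun k => c i k) atTop ≤ liminf (fun k => ∑' i, c i k) atTop := by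
  simpa only [lintegral_count] using
    lintegral_liminf_le (μ := Measure.count) (f := fun k i => c i k)
      fun k => measurable_of_countable _

end Series

section Fatou

variable {Ω : Type*} [MeasurableSpace Ω] {P : Measure Ω}

theorem lintegral_tsum_le_liminf_tsum_lintegral {c : ℕ → ℕ → Ω → ℝ≥0∞} {d : ℕ → Ω → ℝ≥0∞}
    (hc : ∀ i k, Measurable (c i k))
    (h : ∀ᵐ ω ∂P, ∀ i, Tendsto (fun k => c i k ω) atTop (𝓝 (d i ω))) :
    ∫⁻ ω, ∑' i, d i ω ∂P ≤ liminf (fun k => ∑' i, ∫⁻ ω, c i k ω ∂P) atTop :=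
  calc ∫⁻ ω, ∑' i, d i ω ∂P
      = ∫⁻ ω, ∑' i, liminf (fun k => c i k ω) atTop ∂P := by
        refine lintegral_congr_ae ?_
        filter_upwards [h] with ω hω
        exact tsum_congr fun i => (hω i).liminf_eq.symm
    _ ≤ ∫⁻ ω, liminf (fun k => ∑' i, c i k ω) atTop ∂P :=
        lintegral_mono fun ω => ENNReal.tsum_liminf_le_liminf_tsum _
    _ ≤ liminf (fun k => ∫⁻ ω, ∑' i, c i k ω ∂P) atTop :=
        lintegral_liminf_le fun k => Measurable.tsum fun i => hc i k
    _ = liminf (fun k => ∑' i, ∫⁻ ω, c i k ω ∂P) atTop := by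
        simp_rw [lintegral_tsum fun i => (hc i _).aemeasurable]

theorem ae_tsum_ne_top_of_lintegral_tsum_nat_add_ne_top {f : ℕ → Ω → ℝ≥0∞}
    (hf : ∀ i ω, f i ω ≠ ∞) (hmeas : ∀ i, Measurable (f i)) {N : ℕ}
    (h : ∫⁻ ω, ∑' i, f (i + N) ω ∂P ≠ ∞) : ∀ᵐ ω ∂P, ∑' i, f i ω ≠ ∞ := by
  filter_upwards [ae_lt_top (Measurable.tsum fun i => hmeas _) h] with ω hω
  exact ENNReal.tsum_ne_top_of_nat_add (fun i => hf i ω) N hω.ne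

end Fatou

section WeakConvergence

theorem tendsto_of_forall_dist_lt {ι E : Type*} [PseudoMetricSpace E] {L : Filter ι} {u : ι → E}
    {l : E} (h : ∀ ε > 0, ∃ v : ι → E, ∃ l', Tendsto v L (𝓝 l') ∧
      (∀ᶠ k in L, dist (u k) (v k) < ε) ∧ dist l' l < ε) :
    Tendsto u L (𝓝 l) := by
  refine Metric.tendsto_nhds.2 fun ε hε => ?_
  obtain ⟨v, l', hv, huv, hl⟩ := h (ε / 3) (by positivity)
  filter_upwards [huv, Metric.tendsto_nhds.1 hv (ε / 3) (by positivity)] with k hk hvk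
  calc dist (u k) l ≤ dist (u k) (v k) + dist (v k) l' + dist l' l := dist_triangle4 _ _ _ _
    _ < ε / 3 + ε / 3 + ε / 3 := by gcongr
    _ = ε := by ring

variable {X : Type*} [MeasurableSpace X]

theorem isFiniteMeasure_sum {ν : ℕ → Measure X} (hν : ∑' i, ν i univ ≠ ∞) :
    IsFiniteMeasure (Measure.sum ν) :=
  ⟨by rwa [Measure.sum_apply _ MeasurableSet.univ, lt_top_iff_ne_top]⟩

variable [TopologicalSpace X]

theorem tendsto_measure_univ_of_tendsto_integral {ν : ℕ → Measure X} {ν' : Measure X}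
    [∀ k, IsFiniteMeasure (ν k)] [IsFiniteMeasure ν']
    (h : ∀ f : X →ᵇ ℝ, Tendsto (fun k => ∫ x, f x ∂ν k) atTop (𝓝 (∫ x, f x ∂ν'))) :
    Tendsto (fun k => ν k univ) atTop (𝓝 (ν' univ)) := by
  have h1 := h (BoundedContinuousFunction.const X 1)
  simp only [BoundedContinuousFunction.const_apply, integral_const, smul_eq_mul, mul_one,
    measureReal_def] at h1
  exact (ENNReal.tendsto_toReal_iff (fun k => measure_ne_top _ _) (measure_ne_top _ _)).1 h1

variable [OpensMeasurableSpace X]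

theorem dist_integral_sum_measure_le {ν : ℕ → Measure X} (hν : ∑' i, ν i univ ≠ ∞)
    (f : X →ᵇ ℝ) (n : ℕ) :
    dist (∫ x, f x ∂Measure.sum ν) (∑ i ∈ Finset.range n, ∫ x, f x ∂ν i)
      ≤ (∑' i, ν (i + n) univ).toReal * ‖f‖ := by
  have := isFiniteMeasure_sum hν
  have := isFiniteMeasure_sum (ν := fun i => ν (i + n)) <| ne_top_of_le_ne_top hν
    (ENNReal.tsum_comp_le_tsum_of_injective (add_left_injective n) _)
  rw [integral_sum_measure (f.integrable _), ← (hasSum_integral_measure (f.integrable _)).summable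
    |>.sum_add_tsum_nat_add n, dist_self_add_left, ← integral_sum_measure (f.integrable _)]
  simpa [measureReal_def, Measure.sum_apply _ MeasurableSet.univ] using
    BoundedContinuousFunction.norm_integral_le_mul_norm (Measure.sum fun i => ν (i + n)) f

theorem tendsto_integral_sum_measure {ν : ℕ → ℕ → Measure X} {ν' : ℕ → Measure X}
    [∀ i k, IsFiniteMeasure (ν i k)]
    (h : ∀ i (f : X →ᵇ ℝ), Tendsto (fun k => ∫ x, f x ∂ν i k) atTop (𝓝 (∫ x, f x ∂ν' i)))
    (hν' : ∑' i, ν' i univ ≠ ∞)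
    (htail : ∀ ε > 0, ∀ᶠ n in atTop, ∀ᶠ k in atTop, ∑' i, ν (i + n) k univ < ε) (f : X →ᵇ ℝ) :
    Tendsto (fun k => ∫ x, f x ∂Measure.sum fun i => ν i k) atTop
      (𝓝 (∫ x, f x ∂Measure.sum ν')) := by
  refine tendsto_of_forall_dist_lt fun ε hε => ?_
  set ε' := ENNReal.ofReal (ε / (‖f‖ + 1))
  have hε' : 0 < ε' := ENNReal.ofReal_pos.2 (by positivity)
  have hsmall : ∀ t : ℝ≥0∞, t < ε' → t.toReal * ‖f‖ < ε := fun t ht => by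
    have := (lt_div_iff₀ (by positivity)).1 (ENNReal.toReal_lt_of_lt_ofReal ht)
    nlinarith [ENNReal.toReal_nonneg (a := t)]
  obtain ⟨n, hn', hn⟩ := ((ENNReal.tendsto_sum_nat_add _ hν').eventually_lt_const hε'
    |>.and (htail ε' hε')).exists
  refine ⟨fun k => ∑ i ∈ Finset.range n, ∫ x, f x ∂ν i k, ∑ i ∈ Finset.range n, ∫ x, f x ∂ν' i,
    tendsto_finsetSum _ fun i _ => h i f, ?_, ?_⟩
  · filter_upwards [hn] with k hk
    have hfin := ENNReal.tsum_ne_top_of_nat_add (fun i => measure_ne_top (ν i k) univ) n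
      (ne_top_of_lt hk)
    exact (dist_integral_sum_measure_le hfin f n).trans_lt (hsmall _ hk)
  · rw [dist_comm]
    exact (dist_integral_sum_measure_le hν' f n).trans_lt (hsmall _ hn')

end WeakConvergence

section Cutoff

variable {Ω : Type*} [MeasurableSpace Ω] {P : Measure Ω} [IsFiniteMeasure P]

/-- Markov's inequality bounds the tails and a.e. convergence the excesses in probability;
Borel–Cantelli along a subsequence then makes both a.s. eventually small. -/
theorem exists_subseq_ae_eventually_tail_le_and_excess_le {c : ℕ → ℕ → Ω → ℝ≥0∞}
    {d : ℕ → Ω → ℝ≥0∞} (hc : ∀ i m, Measurable (c i m)) (hd : ∀ i, Measurable (d i))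
    (hd_fin : ∀ i ω, d i ω ≠ ∞)
    (hlim : ∀ᵐ ω ∂P, ∀ i, Tendsto (fun m => c i m ω) atTop (𝓝 (d i ω)))
    (htail : ∀ ε : ℝ, 0 < ε → ∃ N, ∀ᶠ m in atTop,
      ∑' i, ∫⁻ ω, c (i + N) m ω ∂P < ENNReal.ofReal ε) :
    ∃ φ N : ℕ → ℕ, StrictMono φ ∧ ∀ᵐ ω ∂P, ∀ᶠ j in atTop,
      ∑' i, c (i + N j) (φ j) ω ≤ 2⁻¹ ^ j ∧
      ∑ i ∈ Finset.range (N j), (c i (φ j) ω - d i ω) ≤ 2⁻¹ ^ j := by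
  set η : ℕ → ℝ≥0∞ := fun j => 2⁻¹ ^ j
  have hη_pos : ∀ j, 0 < η j := fun j => ENNReal.pow_pos (by simp) j
  have hη_top : ∀ j, η j ≠ ∞ := fun j => ENNReal.pow_ne_top (by simp)
  have hη2_top : ∀ j, η j * η j ≠ ∞ := fun j => ENNReal.mul_ne_top (hη_top j) (hη_top j)
  choose N hN using fun j => htail (η j * η j).toReal
    (ENNReal.toReal_pos (ENNReal.mul_pos (hη_pos j).ne' (hη_pos j).ne').ne' (hη2_top j))
  have htail_prob : ∀ j, ∀ᶠ m in atTop, P {ω | η j ≤ ∑' i, c (i + N j) m ω} ≤ η j := by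
    intro j
    filter_upwards [hN j] with m hm
    refine (meas_ge_le_lintegral_div (Measurable.tsum fun i => hc _ _).aemeasurable
      (hη_pos j).ne' (hη_top j)).trans (ENNReal.div_le_of_le_mul ?_)
    rw [lintegral_tsum fun i => (hc _ _).aemeasurable]
    exact (hm.trans_eq (ENNReal.ofReal_toReal (hη2_top j))).le
  have hexcess_prob : ∀ j, ∀ᶠ m in atTop,
      P {ω | η j ≤ ∑ i ∈ Finset.range (N j), (c i m ω - d i ω)} ≤ η j := by
    intro j
    refine (tendsto_measure_le_of_ae_tendsto_zero (fun m => ?_) ?_ (hη_pos j)).eventually_le_const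
      (hη_pos j)
    · exact Finset.measurable_sum _ fun i _ => (hc i m).sub (hd i)
    · filter_upwards [hlim] with ω hω
      simpa using tendsto_finsetSum (Finset.range (N j)) fun i _ =>
        ENNReal.Tendsto.sub (hω i) tendsto_const_nhds (Or.inr (hd_fin i ω))
  have hsum : ∑' j, (η j + η j) ≠ ∞ := by
    simp [η, ENNReal.tsum_add, ENNReal.tsum_geometric]
  obtain ⟨φ, hφ, hgood⟩ := exists_strictMono_ae_eventually_notMem hsum fun j =>
    ((htail_prob j).and (hexcess_prob j)).mono fun m hm =>
      (measure_union_le _ _).trans (add_le_add hm.1 hm.2)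
  refine ⟨φ, N, hφ, ?_⟩
  filter_upwards [hgood] with ω hω
  filter_upwards [hω] with j hj
  simp only [mem_union, mem_ofPred_eq, not_or, not_le] at hj
  exact ⟨hj.1.le, hj.2.le⟩

end Cutoff

section WeakSubseqInProb

variable {X : Type*} [TopologicalSpace X] [MeasurableSpace X]
  {Ω : Type*} [MeasurableSpace Ω] {P : Measure Ω}

theorem weakSubseqInProb_iff_ae [IsProbabilityMeasure P] {μs : ℕ → Ω → Measure X}
    {μ : Ω → Measure X} :
    WeakSubseqInProb P μs μ ↔ ∀ α : ℕ → ℕ, StrictMono α → ∃ β : ℕ → ℕ, StrictMono β ∧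
      range β ⊆ range α ∧ ∀ᵐ ω ∂P, ∀ f : X →ᵇ ℝ,
        Tendsto (fun k => ∫ x, f x ∂μs (β k) ω) atTop (𝓝 (∫ x, f x ∂μ ω)) := by
  simp only [WeakSubseqInProb, ae_iff_exists_measurableSet_prob_one]

theorem WeakSubseqInProb.comp_add {μs : ℕ → Ω → Measure X} {μ : Ω → Measure X}
    (h : WeakSubseqInProb P μs μ) (n : ℕ) : WeakSubseqInProb P (fun k => μs (k + n)) μ := by
  intro α hα
  obtain ⟨β, hβ, hβα, hconv⟩ := h (fun k => α k + n) (hα.add_const n)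
  obtain ⟨σ, hσ, rfl⟩ := (hα.add_const n).exists_comp_eq_of_range_subset hβ hβα
  exact ⟨α ∘ σ, hα.comp hσ, range_comp_subset_range _ _, hconv⟩

variable [IsProbabilityMeasure P] {μs : ℕ → ℕ → Ω → Measure X} {μ : ℕ → Ω → Measure X}

theorem WeakSubseqInProb.exists_subseq_ae_forall_tendsto
    (hconv : ∀ i, WeakSubseqInProb P (μs i) (μ i)) {α : ℕ → ℕ} (hα : StrictMono α) :
    ∃ δ : ℕ → ℕ, StrictMono δ ∧ range δ ⊆ range α ∧ ∀ᵐ ω ∂P, ∀ i (f : X →ᵇ ℝ),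
      Tendsto (fun k => ∫ x, f x ∂μs i (δ k) ω) atTop (𝓝 (∫ x, f x ∂μ i ω)) := by
  simp_rw [ae_all_iff]
  refine exists_diagonal_subseq (fun i β γ hβ hγ hγβ => ?_)
    (fun i => weakSubseqInProb_iff_ae.1 (hconv i)) hα
  filter_upwards [hβ] with ω hω f
  exact (hω f).comp_of_eventually_mem_range (u := fun m => ∫ x, f x ∂μs i m ω) hγ hγβ

variable [∀ i k ω, IsFiniteMeasure (μs i k ω)] [∀ i ω, IsFiniteMeasure (μ i ω)]

theorem WeakSubseqInProb.ae_tsum_measure_univ_ne_top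
    (hconv : ∀ i, WeakSubseqInProb P (μs i) (μ i))
    (hmeas : ∀ i k, Measurable fun ω => μs i k ω univ)
    (hmeas' : ∀ i, Measurable fun ω => μ i ω univ) {N n₀ : ℕ} {C : ℝ≥0∞} (hC : C ≠ ∞)
    (hbdd : ∀ k, n₀ ≤ k → ∑' i, ∫⁻ ω, μs (i + N) k ω univ ∂P ≤ C) :
    ∀ᵐ ω ∂P, ∑' i, μ i ω univ ≠ ∞ := by
  obtain ⟨δ, hδ, -, hδconv⟩ := exists_subseq_ae_forall_tendsto hconv strictMono_id
  refine ae_tsum_ne_top_of_lintegral_tsum_nat_add_ne_top (fun i ω => measure_ne_top _ _) hmeas'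
    (N := N) (ne_top_of_le_ne_top hC ?_)
  calc ∫⁻ ω, ∑' i, μ (i + N) ω univ ∂P
      ≤ liminf (fun k => ∑' i, ∫⁻ ω, μs (i + N) (δ k) ω univ ∂P) atTop := by
        refine lintegral_tsum_le_liminf_tsum_lintegral (fun i k => hmeas _ _) ?_
        filter_upwards [hδconv] with ω h i
        exact tendsto_measure_univ_of_tendsto_integral (h (i + N))
    _ ≤ C := by
        refine liminf_le_of_frequently_le' (Eventually.frequently ?_)
        filter_upwards [hδ.tendsto_atTop.eventually_ge_atTop n₀] with k hk using hbdd _ hk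

theorem WeakSubseqInProb.measure_sum [OpensMeasurableSpace X]
    (hconv : ∀ i, WeakSubseqInProb P (μs i) (μ i))
    (hmeas : ∀ i k, Measurable fun ω => μs i k ω univ)
    (hmeas' : ∀ i, Measurable fun ω => μ i ω univ)
    (htail : ∀ ε : ℝ, 0 < ε → ∃ N n₀ : ℕ, ∀ k, n₀ ≤ k →
      ∑' i, ∫⁻ ω, μs (i + N) k ω univ ∂P < ENNReal.ofReal ε)
    (hfin : ∀ᵐ ω ∂P, ∑' i, μ i ω univ ≠ ∞) :
    WeakSubseqInProb P (fun k ω => Measure.sum fun i => μs i k ω)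
      (fun ω => Measure.sum fun i => μ i ω) := by
  rw [weakSubseqInProb_iff_ae]
  intro α hα
  obtain ⟨δ, hδ, hδα, hδconv⟩ := exists_subseq_ae_forall_tendsto hconv hα
  have hmass : ∀ᵐ ω ∂P, ∀ i, Tendsto (fun m => μs i (δ m) ω univ) atTop (𝓝 (μ i ω univ)) := by
    filter_upwards [hδconv] with ω h i using tendsto_measure_univ_of_tendsto_integral (h i)
  have htail' : ∀ ε : ℝ, 0 < ε → ∃ N, ∀ᶠ m in atTop,
      ∑' i, ∫⁻ ω, μs (i + N) (δ m) ω univ ∂P < ENNReal.ofReal ε := fun ε hε =>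
    let ⟨N, n₀, h⟩ := htail ε hε
    ⟨N, hδ.tendsto_atTop.eventually_ge_atTop n₀ |>.mono fun m hm => h _ hm⟩
  obtain ⟨φ, N, hφ, hgood⟩ := exists_subseq_ae_eventually_tail_le_and_excess_le
    (fun i m => hmeas i (δ m)) hmeas' (fun i ω => measure_ne_top _ _) hmass htail'
  refine ⟨δ ∘ φ, hδ.comp hφ, (range_comp_subset_range _ _).trans hδα, ?_⟩
  filter_upwards [hδconv, hgood, hfin] with ω hconvω hgoodω hfinω f
  refine tendsto_integral_sum_measure (fun i f => (hconvω i f).comp hφ.tendsto_atTop) hfinω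
    (fun ε hε => ENNReal.eventually_tsum_nat_add_lt (N := N)
      (c := fun i k => μs i (δ (φ k)) ω univ) hfinω
      (ENNReal.tendsto_pow_atTop_nhds_zero_iff.2 ENNReal.one_half_lt_one) ?_ ?_ hε) f
  · filter_upwards [hgoodω] with j hj using hj.2
  · filter_upwards [hgoodω] with j hj using hj.1

end WeakSubseqInProb

theorem sum_weak_subseq_in_prob_general
    {X : Type*} [MetricSpace X]
    [MeasurableSpace X] [BorelSpace X]
    {Ω : Type*} [MeasurableSpace Ω] (P : Measure Ω) [IsProbabilityMeasure P]
    (μs : ℕ → ℕ → Ω → Measure X) (μ : ℕ → Ω → Measure X)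
    (hfin : ∀ i k ω, IsFiniteMeasure (μs i k ω))
    (hfinlim : ∀ i ω, IsFiniteMeasure (μ i ω))
    (hmeas : ∀ (i k : ℕ) (E : Set X), MeasurableSet E → Measurable fun ω => μs i k ω E)
    (hmeaslim : ∀ (i : ℕ) (E : Set X), MeasurableSet E → Measurable fun ω => μ i ω E)
    (hconv : ∀ i : ℕ, WeakSubseqInProb P (fun k => μs i k) (μ i))
    (htail : ∀ ε : ℝ, 0 < ε → ∃ N n₀ : ℕ, ∀ k : ℕ, n₀ ≤ k →
      (∑' i : ℕ, ∫⁻ ω, μs (i + N) k ω Set.univ ∂P) < ENNReal.ofReal ε) :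
    ∃ n₁ : ℕ,
      (∀ k : ℕ, n₁ ≤ k → ∀ᵐ ω ∂P, (Measure.sum fun i => μs i k ω) Set.univ < ⊤) ∧
      (∀ᵐ ω ∂P, (Measure.sum fun i => μ i ω) Set.univ < ⊤) ∧
      WeakSubseqInProb P (fun k ω => Measure.sum fun i => μs i (k + n₁) ω)
        (fun ω => Measure.sum fun i => μ i ω) := by
  have hmeas_univ : ∀ i k, Measurable fun ω => μs i k ω univ := fun i k => hmeas i k _ .univ
  have hmeaslim_univ : ∀ i, Measurable fun ω => μ i ω univ := fun i => hmeaslim i _ .univ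
  obtain ⟨N, n₁, h₁⟩ := htail 1 one_pos
  have hlim_fin : ∀ᵐ ω ∂P, ∑' i, μ i ω univ ≠ ∞ :=
    WeakSubseqInProb.ae_tsum_measure_univ_ne_top hconv hmeas_univ hmeaslim_univ
      ENNReal.ofReal_ne_top fun k hk => (h₁ k hk).le
  refine ⟨n₁, fun k hk => ?_, ?_,
    (WeakSubseqInProb.measure_sum hconv hmeas_univ hmeaslim_univ htail hlim_fin).comp_add n₁⟩
  · have hfin_k := ae_tsum_ne_top_of_lintegral_tsum_nat_add_ne_top
      (fun i ω => measure_ne_top (μs i k ω) univ) (fun i => hmeas_univ i k) (P := P) (N := N)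
      (by rw [lintegral_tsum fun i => (hmeas_univ _ k).aemeasurable]; exact (h₁ k hk).ne_top)
    filter_upwards [hfin_k] with ω hω
    rwa [Measure.sum_apply _ .univ, lt_top_iff_ne_top]
  · filter_upwards [hlim_fin] with ω hω
    rwa [Measure.sum_apply _ .univ, lt_top_iff_ne_top]

/-- **Sums of weakly subsequentially-in-probability convergent random measures.**  If for
every `i` the random finite measures `μs i k` converge to `μ i` weakly subsequentially in
probability, and the tail expectations `Σ_{i≥N} E(μs i k (X))` are uniformly small, then
for large `k` the sums `Σ_i μs i k` are a.s. finite random measures converging weakly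
subsequentially in probability to the a.s. finite random measure `Σ_i μ i`. -/
theorem sum_weak_subseq_in_prob
    {X : Type*} [MetricSpace X] [CompleteSpace X] [TopologicalSpace.SeparableSpace X]
    [MeasurableSpace X] [BorelSpace X]
    {Ω : Type*} [MeasurableSpace Ω] (P : Measure Ω) [IsProbabilityMeasure P]
    (μs : ℕ → ℕ → Ω → Measure X) (μ : ℕ → Ω → Measure X)
    (hfin : ∀ i k ω, IsFiniteMeasure (μs i k ω))
    (hfinlim : ∀ i ω, IsFiniteMeasure (μ i ω))
    (hmeas : ∀ (i k : ℕ) (E : Set X), MeasurableSet E → Measurable fun ω => μs i k ω E)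
    (hmeaslim : ∀ (i : ℕ) (E : Set X), MeasurableSet E → Measurable fun ω => μ i ω E)
    (hconv : ∀ i : ℕ, WeakSubseqInProb P (fun k => μs i k) (μ i))
    (htail : ∀ ε : ℝ, 0 < ε → ∃ N n₀ : ℕ, ∀ k : ℕ, n₀ ≤ k →
      (∑' i : ℕ, ∫⁻ ω, μs (i + N) k ω Set.univ ∂P) < ENNReal.ofReal ε) :
    ∃ n₁ : ℕ,
      (∀ k : ℕ, n₁ ≤ k → ∀ᵐ ω ∂P, (Measure.sum fun i => μs i k ω) Set.univ < ⊤) ∧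
      (∀ᵐ ω ∂P, (Measure.sum fun i => μ i ω) Set.univ < ⊤) ∧
      WeakSubseqInProb P (fun k ω => Measure.sum fun i => μs i (k + n₁) ω)
        (fun ω => Measure.sum fun i => μ i ω) :=
  sum_weak_subseq_in_prob_general P μs μ hfin hfinlim hmeas hmeaslim hconv htail
end

section
/- Let X be a complete separable metric space, (μ_k) a sequence of random finite Borel measures on X on a probability space (Ω, 𝒜, P), and (F_k) a sequence of maps F_k : Ω → {closed subsets of X} such that almost surely F_1(ω) ⊇ F_2(ω) ⊇ … and, for each k, μ_{k,ω}(X ∖ F_k(ω)) = 0 for P-almost every ω (i.e. supp μ_k ⊆ F_k almost surely). If μ_k weakly converges to a random finite Borel measure μ subsequentially in probability, then for P-almost every ω the support of μ_ω is contained in ⋂_{n=1}^∞ F_n(ω), i.e. μ_ω( X ∖ ⋂_n F_n(ω) ) = 0. -/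
open MeasureTheory Filter Set Topology

/-! Along the subsequence given by `hconv` for the full sequence, on the good event the measures
`μ_{β k}` converge weakly and are eventually supported in each closed set `F_n`, because
`β k ≥ k ≥ n`. By the portmanteau inequality for closed sets and the convergence of total
masses, the limit gives full mass to every `F_n`, hence to their intersection. -/

namespace MeasureTheory.FiniteMeasure

variable {X : Type*} [MeasurableSpace X] [TopologicalSpace X] [OpensMeasurableSpace X]
  [HasOuterApproxClosed X]

theorem measure_compl_eq_zero_of_tendsto {ι : Type*} {L : Filter ι} [L.NeBot]
    {μs : ι → FiniteMeasure X} {μ : FiniteMeasure X} (hlim : Tendsto μs L (𝓝 μ))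
    {F : Set X} (hF : IsClosed F) (hsupp : ∀ᶠ i in L, (μs i : Measure X) Fᶜ = 0) :
    (μ : Measure X) Fᶜ = 0 := by
  have hmass : Tendsto (fun i => (μs i : Measure X) univ) L (𝓝 ((μ : Measure X) univ)) := by
    simpa only [ennreal_mass] using ENNReal.tendsto_coe.2 hlim.mass
  have hfull : ∀ᶠ i in L, (μs i : Measure X) univ = (μs i : Measure X) F :=
    hsupp.mono fun i hi => by rw [← measure_add_measure_compl hF.measurableSet, hi, add_zero]
  have hle : (μ : Measure X) univ ≤ (μ : Measure X) F :=
    calc (μ : Measure X) univ = L.limsup fun i => (μs i : Measure X) univ := hmass.limsup_eq.symm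
      _ = L.limsup fun i => (μs i : Measure X) F := limsup_congr hfull
      _ ≤ (μ : Measure X) F := limsup_measure_closed_le_of_tendsto hlim hF
  rw [measure_compl hF.measurableSet (measure_ne_top _ F)]
  exact tsub_eq_zero_of_le hle

theorem measure_compl_iInter_eq_zero_of_tendsto {μs : ℕ → FiniteMeasure X}
    {μ : FiniteMeasure X} (hlim : Tendsto μs atTop (𝓝 μ)) {F : ℕ → Set X}
    (hF : ∀ n, IsClosed (F n)) (hanti : Antitone F) (hsupp : ∀ n, (μs n : Measure X) (F n)ᶜ = 0) :
    (μ : Measure X) (⋂ n, F n)ᶜ = 0 := by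
  rw [compl_iInter]
  refine measure_iUnion_null fun n => measure_compl_eq_zero_of_tendsto hlim (hF n) ?_
  filter_upwards [eventually_ge_atTop n] with k hk
  exact measure_mono_null (compl_subset_compl.2 (hanti hk)) (hsupp k)

end MeasureTheory.FiniteMeasure

theorem support_of_weak_subseq_limit_general
    {X : Type*} [MetricSpace X]
    [MeasurableSpace X] [BorelSpace X]
    {Ω : Type*} [MeasurableSpace Ω] (P : Measure Ω) [IsProbabilityMeasure P]
    (μs : ℕ → Ω → Measure X) (μ : Ω → Measure X)
    (hfin : ∀ k ω, IsFiniteMeasure (μs k ω))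
    (hfinlim : ∀ ω, IsFiniteMeasure (μ ω))
    (F : ℕ → Ω → Set X)
    (hFclosed : ∀ k ω, IsClosed (F k ω))
    (hFanti : ∀ᵐ ω ∂P, ∀ k : ℕ, F (k + 1) ω ⊆ F k ω)
    (hsupp : ∀ k : ℕ, ∀ᵐ ω ∂P, μs k ω (F k ω)ᶜ = 0)
    (hconv : WeakSubseqInProb P μs μ) :
    ∀ᵐ ω ∂P, μ ω (⋂ n : ℕ, F n ω)ᶜ = 0 := by
  obtain ⟨β, hβ, -, H, hHmeas, hH1, hHconv⟩ := hconv id strictMono_id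
  have hH : ∀ᵐ ω ∂P, ω ∈ H := (mem_ae_iff_prob_eq_one hHmeas).2 hH1
  filter_upwards [hFanti, ae_all_iff.2 hsupp, hH] with ω hanti hsuppω hωH
  have hanti' : Antitone fun n => F n ω := antitone_nat_of_succ_le hanti
  let ν : ℕ → FiniteMeasure X := fun k => ⟨μs (β k) ω, hfin _ ω⟩
  have hlim : Tendsto ν atTop (𝓝 ⟨μ ω, hfinlim ω⟩) :=
    FiniteMeasure.tendsto_iff_forall_integral_tendsto.2 (hHconv ω hωH)
  exact FiniteMeasure.measure_compl_iInter_eq_zero_of_tendsto hlim (fun n => hFclosed n ω) hanti'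
    fun k => measure_mono_null (compl_subset_compl.2 (hanti' (hβ.id_le k))) (hsuppω (β k))

/-- **Support of the limit of random measures.**  If the random finite measures `μ_k` are
a.s. supported in a decreasing sequence of random closed sets `F_k`, and `μ_k` converges
weakly subsequentially in probability to `μ`, then almost surely `μ` is supported in
`⋂_n F_n`. -/
theorem support_of_weak_subseq_limit
    {X : Type*} [MetricSpace X] [CompleteSpace X] [TopologicalSpace.SeparableSpace X]
    [MeasurableSpace X] [BorelSpace X]
    {Ω : Type*} [MeasurableSpace Ω] (P : Measure Ω) [IsProbabilityMeasure P]
    (μs : ℕ → Ω → Measure X) (μ : Ω → Measure X)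
    (hfin : ∀ k ω, IsFiniteMeasure (μs k ω))
    (hfinlim : ∀ ω, IsFiniteMeasure (μ ω))
    (hmeas : ∀ (k : ℕ) (E : Set X), MeasurableSet E → Measurable fun ω => μs k ω E)
    (hmeaslim : ∀ E : Set X, MeasurableSet E → Measurable fun ω => μ ω E)
    (F : ℕ → Ω → Set X)
    (hFclosed : ∀ k ω, IsClosed (F k ω))
    (hFanti : ∀ᵐ ω ∂P, ∀ k : ℕ, F (k + 1) ω ⊆ F k ω)
    (hsupp : ∀ k : ℕ, ∀ᵐ ω ∂P, μs k ω (F k ω)ᶜ = 0)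
    (hconv : WeakSubseqInProb P μs μ) :
    ∀ᵐ ω ∂P, μ ω (⋂ n : ℕ, F n ω)ᶜ = 0 :=
  support_of_weak_subseq_limit_general P μs μ hfin hfinlim F hFclosed hFanti hsupp hconv
end

section
/- Let X be a complete separable metric space, (Ω, 𝒜, P) a probability space, ν a finite Borel measure on X, and K : X × X → [0,∞] a nonnegative Borel function; write I_K(τ) = ∫∫ K(x,y) dτ(x) dτ(y). Suppose that to every finite Borel measure τ on X with τ ≪ ν there is assigned a random finite Borel measure 𝒞(τ) on X such that: (1) whenever (ν_i) are finite Borel measures with ν_i ≪ ν and γ_i ≥ 0 satisfy Σ_i γ_i ν_i ≤ ν, then Σ_i γ_i 𝒞(ν_i) ≤ 𝒞(ν) almost surely (as measures); (2) E( 𝒞(τ)(X) ) ≥ τ(X) for every finite Borel measure τ ≪ ν with I_K(τ) < ∞ (this combines the paper's hypotheses that E(𝒞(τ)(X)) is at least the total mass of the φ-regular part of τ and that every measure of finite K-energy has vanishing singular part); (3) E( 𝒞(τ)(X)² ) ≤ I_K(τ) for every finite Borel measure τ ≪ ν. Then P( 𝒞(ν)(X) > 0 ) ≥ C_K(ν),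 where C_K(ν) = sup{ I_K(τ)^{-1} : τ a Borel probability measure on X with τ ≪ ν } (sup ∅ = 0). -/
open MeasureTheory Filter Set Topology

/-- The `K`-energy of a Borel measure `τ` with respect to a nonnegative kernel `K`:
`I_K(τ) = ∫∫ K(x,y) dτ(x) dτ(y)`. -/
noncomputable def kernelEnergy {X : Type*} [MeasurableSpace X]
    (K : X → X → ENNReal) (τ : Measure X) : ENNReal :=
  ∫⁻ x, ∫⁻ y, K x y ∂τ ∂τ

/-- The `K`-capacity of a Borel measure `ν`:
`C_K(ν) = sup { I_K(τ)⁻¹ : τ a probability measure with τ ≪ ν }` (`0` if there is none). -/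
noncomputable def measureCapacity {X : Type*} [MeasurableSpace X]
    (K : X → X → ENNReal) (ν : Measure X) : ENNReal :=
  ⨆ (τ : Measure X) (_ : IsProbabilityMeasure τ) (_ : τ ≪ ν), (kernelEnergy K τ)⁻¹

/-! Cap the density of a probability measure `τ ≪ ν` of finite energy at `n`, giving
`τₙ ≤ τ` with `τₙ ≤ n • ν`. Superadditivity applied to `n⁻¹ • τₙ ≤ ν` shows that `𝒞(τₙ) ≠ 0`
forces `𝒞(ν) ≠ 0` almost surely, and with `Z = 𝒞(τₙ)(X)` the second moment method gives
`τₙ(X)² ≤ (E Z)² ≤ E Z² · P(Z > 0) ≤ I_K(τ) · P(𝒞(ν)(X) > 0)`. As `n → ∞`, `τₙ(X) → 1`. -/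

open scoped NNReal ENNReal

section SecondMoment

variable {Ω : Type*} [MeasurableSpace Ω]

theorem sq_lintegral_le_lintegral_sq_mul_measure_pos (P : Measure Ω) {Z : Ω → ℝ≥0∞}
    (hZ : Measurable Z) :
    (∫⁻ ω, Z ω ∂P) ^ 2 ≤ (∫⁻ ω, Z ω ^ 2 ∂P) * P {ω | 0 < Z ω} := by
  set S := {ω | 0 < Z ω}
  have hS : MeasurableSet S := measurableSet_lt measurable_const hZ
  have hZS : ∀ ω, Z ω = Z ω * S.indicator 1 ω := by
    intro ω
    by_cases h : ω ∈ S
    · simp [h]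
    · simp_all [S]
  have holder := ENNReal.lintegral_mul_le_Lp_mul_Lq P Real.HolderConjugate.two_two
    hZ.aemeasurable (aemeasurable_one.indicator hS)
  have h_ind : ∫⁻ ω, S.indicator 1 ω ^ (2 : ℝ) ∂P = P S := by
    have : (fun ω => S.indicator (1 : Ω → ℝ≥0∞) ω ^ (2 : ℝ)) = S.indicator 1 := by
      ext ω
      by_cases h : ω ∈ S <;> simp [h]
    rw [this, lintegral_indicator_one hS]
  have h_sq (x : ℝ≥0∞) : (x ^ (1 / (2 : ℝ))) ^ 2 = x := by
    rw [← ENNReal.rpow_natCast, ← ENNReal.rpow_mul]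
    norm_num
  calc (∫⁻ ω, Z ω ∂P) ^ 2 = (∫⁻ ω, Z ω * S.indicator 1 ω ∂P) ^ 2 := by
        rw [lintegral_congr hZS]
    _ ≤ ((∫⁻ ω, Z ω ^ (2 : ℝ) ∂P) ^ (1 / (2 : ℝ)) * (P S) ^ (1 / (2 : ℝ))) ^ 2 := by
        rw [← h_ind]
        exact pow_le_pow_left' holder 2
    _ = (∫⁻ ω, Z ω ^ 2 ∂P) * P S := by simp_rw [mul_pow, h_sq, ENNReal.rpow_two]

end SecondMoment

section RnDerivTruncation

variable {X : Type*} [MeasurableSpace X]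

noncomputable def rnDerivTruncation (τ ν : Measure X) (c : ℝ≥0∞) : Measure X :=
  ν.withDensity fun x => min (τ.rnDeriv ν x) c

variable (τ ν : Measure X)

theorem rnDerivTruncation_le_smul (c : ℝ≥0∞) : rnDerivTruncation τ ν c ≤ c • ν := by
  rw [← withDensity_const]
  exact withDensity_mono (ae_of_all _ fun _ => min_le_right _ _)

theorem rnDerivTruncation_le (c : ℝ≥0∞) : rnDerivTruncation τ ν c ≤ τ :=
  (withDensity_mono (ae_of_all _ fun _ => min_le_left _ _)).trans (τ.withDensity_rnDeriv_le ν)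

theorem rnDerivTruncation_absolutelyContinuous (c : ℝ≥0∞) : rnDerivTruncation τ ν c ≪ ν :=
  withDensity_absolutelyContinuous _ _

instance [IsFiniteMeasure τ] (c : ℝ≥0∞) : IsFiniteMeasure (rnDerivTruncation τ ν c) :=
  isFiniteMeasure_of_le τ (rnDerivTruncation_le τ ν c)

theorem tendsto_rnDerivTruncation_univ [τ.HaveLebesgueDecomposition ν] (hτν : τ ≪ ν) :
    Tendsto (fun n : ℕ => rnDerivTruncation τ ν n univ) atTop (𝓝 (τ univ)) := by
  simp only [rnDerivTruncation, withDensity_apply _ MeasurableSet.univ, Measure.restrict_univ]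
  rw [← Measure.lintegral_rnDeriv hτν]
  refine lintegral_tendsto_of_tendsto_of_monotone
    (fun n => ((τ.measurable_rnDeriv ν).min measurable_const).aemeasurable)
    (ae_of_all _ fun x m n hmn => min_le_min_left _ (by exact_mod_cast hmn))
    (ae_of_all _ fun x => ?_)
  simpa using tendsto_const_nhds.min ENNReal.tendsto_nat_nhds_top

end RnDerivTruncation

theorem kernelEnergy_mono {X : Type*} [MeasurableSpace X] (K : X → X → ℝ≥0∞)
    {μ τ : Measure X} (h : μ ≤ τ) : kernelEnergy K μ ≤ kernelEnergy K τ :=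
  lintegral_mono' h fun _ => lintegral_mono' h le_rfl

section Superadditivity

variable {X Ω : Type*} [MeasurableSpace X] [MeasurableSpace Ω] {P : Measure Ω}
  {ν μ : Measure X} [IsFiniteMeasure μ] {C : Measure X → Ω → Measure X}

theorem measure_mass_pos_le_of_le_smul
    (h1 : ∀ (νs : ℕ → Measure X) (γ : ℕ → ℝ≥0),
      (∀ i, IsFiniteMeasure (νs i)) → (∀ i, νs i ≪ ν) →
      Measure.sum (fun i => (γ i : ℝ≥0∞) • νs i) ≤ ν →
      ∀ᵐ ω ∂P, Measure.sum (fun i => (γ i : ℝ≥0∞) • C (νs i) ω) ≤ C ν ω)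
    (hμν : μ ≪ ν) {c : ℝ≥0} (hc : c ≠ 0) (hμ : μ ≤ (c : ℝ≥0∞) • ν) :
    P {ω | 0 < C μ ω univ} ≤ P {ω | 0 < C ν ω univ} := by
  have ha : ((c⁻¹ : ℝ≥0) : ℝ≥0∞) = (c : ℝ≥0∞)⁻¹ := ENNReal.coe_inv hc
  have h_single (ρ : Measure X) :
      Measure.sum (fun i => ((Pi.single 0 c⁻¹ : ℕ → ℝ≥0) i : ℝ≥0∞) • ρ) =
        ((c⁻¹ : ℝ≥0) : ℝ≥0∞) • ρ := by
    ext s hs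
    rw [Measure.sum_apply _ hs, tsum_eq_single 0 fun i hi => by simp [hi]]
    simp
  have h_smul : ((c⁻¹ : ℝ≥0) : ℝ≥0∞) • μ ≤ ν := by
    refine Measure.le_iff'.2 fun s => ?_
    calc ((c⁻¹ : ℝ≥0) : ℝ≥0∞) * μ s ≤ (c : ℝ≥0∞)⁻¹ * (c * ν s) := by
          rw [ha]
          exact mul_le_mul_right (hμ s) _
      _ = ν s := by rw [← mul_assoc, ENNReal.inv_mul_cancel (by simpa) (by simp), one_mul]
  have hC : ∀ᵐ ω ∂P, ((c⁻¹ : ℝ≥0) : ℝ≥0∞) • C μ ω ≤ C ν ω := by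
    simpa only [h_single] using
      h1 (fun _ => μ) (Pi.single 0 c⁻¹) (fun _ => ‹_›) (fun _ => hμν) (by rwa [h_single])
  refine measure_mono_ae ?_
  filter_upwards [hC] with ω hω hpos
  have hpos' : 0 < ((c⁻¹ : ℝ≥0) : ℝ≥0∞) * C μ ω univ := ENNReal.mul_pos (by simpa) hpos.ne'
  exact hpos'.trans_le (hω univ)

end Superadditivity

theorem one_le_kernelEnergy_mul_measure_mass_pos {X Ω : Type*} [MeasurableSpace X]
    [MeasurableSpace Ω] (P : Measure Ω) (ν : Measure X) [SigmaFinite ν]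
    (K : X → X → ℝ≥0∞) (C : Measure X → Ω → Measure X)
    (hCmass : ∀ τ : Measure X, τ ≪ ν → Measurable fun ω => C τ ω univ)
    (h1 : ∀ (νs : ℕ → Measure X) (γ : ℕ → ℝ≥0),
      (∀ i, IsFiniteMeasure (νs i)) → (∀ i, νs i ≪ ν) →
      Measure.sum (fun i => (γ i : ℝ≥0∞) • νs i) ≤ ν →
      ∀ᵐ ω ∂P, Measure.sum (fun i => (γ i : ℝ≥0∞) • C (νs i) ω) ≤ C ν ω)
    (h2 : ∀ τ : Measure X, IsFiniteMeasure τ → τ ≪ ν → kernelEnergy K τ < ⊤ →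
      τ univ ≤ ∫⁻ ω, C τ ω univ ∂P)
    (h3 : ∀ τ : Measure X, IsFiniteMeasure τ → τ ≪ ν →
      ∫⁻ ω, (C τ ω univ) ^ 2 ∂P ≤ kernelEnergy K τ)
    {τ : Measure X} [IsProbabilityMeasure τ] (hτν : τ ≪ ν) (hτ : kernelEnergy K τ ≠ ⊤) :
    1 ≤ kernelEnergy K τ * P {ω | 0 < C ν ω univ} := by
  have h_bound (n : ℕ) (hn : n ≠ 0) :
      rnDerivTruncation τ ν n univ ^ 2 ≤ kernelEnergy K τ * P {ω | 0 < C ν ω univ} := by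
    set μ := rnDerivTruncation τ ν n
    have hμν : μ ≪ ν := rnDerivTruncation_absolutelyContinuous τ ν n
    have hE : kernelEnergy K μ ≤ kernelEnergy K τ :=
      kernelEnergy_mono K (rnDerivTruncation_le τ ν n)
    have hμ : μ ≤ ((n : ℝ≥0) : ℝ≥0∞) • ν := by
      simpa using rnDerivTruncation_le_smul τ ν n
    calc μ univ ^ 2 ≤ (∫⁻ ω, C μ ω univ ∂P) ^ 2 :=
          pow_le_pow_left' (h2 μ inferInstance hμν (hE.trans_lt hτ.lt_top)) 2
      _ ≤ (∫⁻ ω, C μ ω univ ^ 2 ∂P) * P {ω | 0 < C μ ω univ} :=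
          sq_lintegral_le_lintegral_sq_mul_measure_pos P (hCmass μ hμν)
      _ ≤ kernelEnergy K τ * P {ω | 0 < C ν ω univ} :=
          mul_le_mul' ((h3 μ inferInstance hμν).trans hE)
            (measure_mass_pos_le_of_le_smul h1 hμν (by simpa using hn) hμ)
  have h_lim :=
    ((ENNReal.continuous_pow 2).tendsto _).comp (tendsto_rnDerivTruncation_univ τ ν hτν)
  simpa using le_of_tendsto h_lim ((eventually_ne_atTop 0).mono h_bound)

theorem nonextinction_probability_ge_capacity_general
    {X : Type*} [MeasurableSpace X]
    {Ω : Type*} [MeasurableSpace Ω] (P : Measure Ω)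
    (ν : Measure X) [IsFiniteMeasure ν]
    (K : X → X → ENNReal)
    (C : Measure X → Ω → Measure X)
    (hCmeas : ∀ τ : Measure X, τ ≪ ν →
      ∀ E : Set X, MeasurableSet E → Measurable fun ω => C τ ω E)
    (h1 : ∀ (νs : ℕ → Measure X) (γ : ℕ → NNReal),
      (∀ i, IsFiniteMeasure (νs i)) → (∀ i, νs i ≪ ν) →
      Measure.sum (fun i => (γ i : ENNReal) • νs i) ≤ ν →
      ∀ᵐ ω ∂P, Measure.sum (fun i => (γ i : ENNReal) • C (νs i) ω) ≤ C ν ω)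
    (h2 : ∀ τ : Measure X, IsFiniteMeasure τ → τ ≪ ν → kernelEnergy K τ < ⊤ →
      τ Set.univ ≤ ∫⁻ ω, C τ ω Set.univ ∂P)
    (h3 : ∀ τ : Measure X, IsFiniteMeasure τ → τ ≪ ν →
      ∫⁻ ω, (C τ ω Set.univ) ^ 2 ∂P ≤ kernelEnergy K τ) :
    measureCapacity K ν ≤ P {ω | 0 < C ν ω Set.univ} := by
  refine iSup_le fun τ => iSup_le fun _ => iSup_le fun hτν => ?_
  rcases eq_or_ne (kernelEnergy K τ) ⊤ with hτ | hτ
  · simp [hτ]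
  have h_one := one_le_kernelEnergy_mul_measure_mass_pos P ν K C
    (fun τ hτν => hCmeas τ hτν univ .univ) h1 h2 h3 hτν hτ
  have h0 : kernelEnergy K τ ≠ 0 := by
    rintro h0
    simp [h0] at h_one
  exact (ENNReal.inv_le_iff_le_mul (fun _ => h0) fun h => absurd h hτ).2 h_one

/-- **Lower bound for the probability of non-extinction of the conditional measure.**
Under the hypotheses (1)–(3) on the assignment `τ ↦ 𝒞(τ)` of random finite Borel measures
to finite measures `τ ≪ ν`, the probability that `𝒞(ν)` is nonzero is at least the
`K`-capacity `C_K(ν)`. -/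
theorem nonextinction_probability_ge_capacity
    {X : Type*} [MetricSpace X] [CompleteSpace X] [TopologicalSpace.SeparableSpace X]
    [MeasurableSpace X] [BorelSpace X]
    {Ω : Type*} [MeasurableSpace Ω] (P : Measure Ω) [IsProbabilityMeasure P]
    (ν : Measure X) [IsFiniteMeasure ν]
    (K : X → X → ENNReal) (hK : Measurable (Function.uncurry K))
    (C : Measure X → Ω → Measure X)
    (hCfin : ∀ τ : Measure X, τ ≪ ν → ∀ ω, IsFiniteMeasure (C τ ω))
    (hCmeas : ∀ τ : Measure X, τ ≪ ν →
      ∀ E : Set X, MeasurableSet E → Measurable fun ω => C τ ω E)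
    (h1 : ∀ (νs : ℕ → Measure X) (γ : ℕ → NNReal),
      (∀ i, IsFiniteMeasure (νs i)) → (∀ i, νs i ≪ ν) →
      Measure.sum (fun i => (γ i : ENNReal) • νs i) ≤ ν →
      ∀ᵐ ω ∂P, Measure.sum (fun i => (γ i : ENNReal) • C (νs i) ω) ≤ C ν ω)
    (h2 : ∀ τ : Measure X, IsFiniteMeasure τ → τ ≪ ν → kernelEnergy K τ < ⊤ →
      τ Set.univ ≤ ∫⁻ ω, C τ ω Set.univ ∂P)
    (h3 : ∀ τ : Measure X, IsFiniteMeasure τ → τ ≪ ν →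
      ∫⁻ ω, (C τ ω Set.univ) ^ 2 ∂P ≤ kernelEnergy K τ) :
    measureCapacity K ν ≤ P {ω | 0 < C ν ω Set.univ} :=
  nonextinction_probability_ge_capacity_general P ν K C hCmeas h1 h2 h3
end
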